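/- arXiv:1412.0926 — 6 statements merged into one kernel-verified Lean document; each statement's English description precedes it below -/
import Mathlib

section
/- Let r ≥ 0 and d ≥ 1 be integers, and let ρ_1, ρ_2 : □^d_r → ℤ be two rank functions that both satisfy the unit-drop property ρ(i + e_m) ≥ ρ(i) − 1 for every i ∈ □^d_r and every m with i + e_m ∈ □^d_r. If the jump sets of ρ_1 and ρ_2 coincide, then ρ_1 = ρ_2. In other words, such a rank function is completely determined by its jump set. -/
def InCube (r : ℕ) {d : ℕ} (i : Fin d → ℕ) : Prop := ∀ m, i m ≤ r

def Supermodular (r : ℕ) {d : ℕ} (ρ : (Fin d → ℕ) → ℤ) : Prop :=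
  ∀ i j : Fin d → ℕ, InCube r i → InCube r j →
    ρ i + ρ j ≤ ρ (fun m => max (i m) (j m)) + ρ (fun m => min (i m) (j m))

def IsRankFunction (r : ℕ) {d : ℕ} (ρ : (Fin d → ℕ) → ℤ) : Prop :=
  Supermodular r ρ ∧
  (∀ i j : Fin d → ℕ, InCube r j → (∀ m, i m ≤ j m) → ρ j ≤ ρ i) ∧
  (∀ i : Fin d → ℕ, InCube r i → -1 ≤ ρ i ∧ ρ i ≤ (r : ℤ)) ∧
  ρ (fun _ => 0) = (r : ℤ) ∧
  (1 ≤ r → ∀ m : Fin d, ρ (fun m' => if m' = m then 1 else 0) = (r : ℤ) - 1)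

def UnitDrop (r : ℕ) {d : ℕ} (ρ : (Fin d → ℕ) → ℤ) : Prop :=
  ∀ i : Fin d → ℕ, InCube r i → ∀ m : Fin d, i m + 1 ≤ r →
    ρ i - 1 ≤ ρ (Function.update i m (i m + 1))

def JumpSet (r : ℕ) {d : ℕ} (ρ : (Fin d → ℕ) → ℤ) : Set (Fin d → ℕ) :=
  {i | InCube r i ∧ 0 ≤ ρ i ∧
    ∀ m : Fin d, i m + 1 ≤ r → ρ (Function.update i m (i m + 1)) = ρ i - 1}

noncomputable def gstep (r : ℕ) {d : ℕ} (ρ : (Fin d → ℕ) → ℤ) (c : Fin d → ℕ) :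
    Fin d → ℕ :=
  if h : ∃ m, c m + 1 ≤ r ∧ ρ (Function.update c m (c m + 1)) = ρ c then
    Function.update c h.choose (c h.choose + 1)
  else if h2 : ∃ m, c m + 1 ≤ r then
    Function.update c h2.choose (c h2.choose + 1)
  else c

lemma incube_update {r d : ℕ} {c : Fin d → ℕ} (hc : InCube r c) {m : Fin d}
    (hm : c m + 1 ≤ r) : InCube r (Function.update c m (c m + 1)) := by
  intro m'
  rcases eq_or_ne m' m with h | h
  · subst h; simpa using hm
  · rw [Function.update_of_ne h]; exact hc m'

lemma le_update {d : ℕ} (c : Fin d → ℕ) (m : Fin d) :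
    ∀ m', c m' ≤ Function.update c m (c m + 1) m' := by
  intro m'
  rcases eq_or_ne m' m with h | h
  · subst h; simp
  · rw [Function.update_of_ne h]

lemma gstep_cases {r d : ℕ} (ρ : (Fin d → ℕ) → ℤ) (c : Fin d → ℕ) :
    (gstep r ρ c = c ∧ ¬∃ m, c m + 1 ≤ r) ∨
    ∃ m, c m + 1 ≤ r ∧ gstep r ρ c = Function.update c m (c m + 1) := by
  unfold gstep
  split_ifs with h h2
  · exact Or.inr ⟨h.choose, h.choose_spec.1, rfl⟩
  · exact Or.inr ⟨h2.choose, h2.choose_spec, rfl⟩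
  · exact Or.inl ⟨rfl, h2⟩

lemma gstep_spec {r d : ℕ} {ρ : (Fin d → ℕ) → ℤ} (h₁ : IsRankFunction r ρ)
    (h₁' : UnitDrop r ρ) {c : Fin d → ℕ} (hc : InCube r c)
    (hex : ∃ m, c m + 1 ≤ r) :
    ∃ m, c m + 1 ≤ r ∧ gstep r ρ c = Function.update c m (c m + 1) ∧
      (c ∈ JumpSet r ρ → ρ (gstep r ρ c) = ρ c - 1) ∧
      (c ∉ JumpSet r ρ → ρ (gstep r ρ c) = ρ c) := by
  obtain ⟨hsuper, hmono, hbd, hz0, hb⟩ := h₁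
  unfold gstep
  split_ifs with h h2
  · refine ⟨h.choose, h.choose_spec.1, rfl, ?_, fun _ => h.choose_spec.2⟩
    intro hcJ
    have h3 := hcJ.2.2 h.choose h.choose_spec.1
    have h4 := h.choose_spec.2
    omega
  · have hall : ∀ m, c m + 1 ≤ r → ρ (Function.update c m (c m + 1)) = ρ c - 1 := by
      intro m hm
      have hne : ρ (Function.update c m (c m + 1)) ≠ ρ c := fun he => h ⟨m, hm, he⟩
      have hd1 := h₁' c hc m hm
      have hd2 := hmono c (Function.update c m (c m + 1)) (incube_update hc hm)
        (le_update c m)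
      omega
    have hcJ : c ∈ JumpSet r ρ := by
      refine ⟨hc, ?_, hall⟩
      obtain ⟨m, hm⟩ := hex
      have h5 := hall m hm
      have h6 := (hbd _ (incube_update hc hm)).1
      omega
    exact ⟨hex.choose, hex.choose_spec, rfl, fun _ => hall _ hex.choose_spec,
      fun hn => absurd hcJ hn⟩

lemma step_key {r d : ℕ} {ρ₁ ρ₂ : (Fin d → ℕ) → ℤ}
    (h₁ : IsRankFunction r ρ₁) (h₁' : UnitDrop r ρ₁)
    (h₂ : IsRankFunction r ρ₂)
    (hJ : JumpSet r ρ₁ = JumpSet r ρ₂) {c : Fin d → ℕ} (hc : InCube r c) :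
    InCube r (gstep r ρ₁ c) ∧
      ρ₁ c - ρ₁ (gstep r ρ₁ c) ≤ ρ₂ c - ρ₂ (gstep r ρ₁ c) := by
  by_cases hex : ∃ m, c m + 1 ≤ r
  · obtain ⟨m, hm, hS, hvalJ, hvalN⟩ := gstep_spec h₁ h₁' hc hex
    have hcube : InCube r (gstep r ρ₁ c) := hS ▸ incube_update hc hm
    have hle : ∀ m', c m' ≤ gstep r ρ₁ c m' := by rw [hS]; exact le_update c m
    refine ⟨hcube, ?_⟩
    by_cases hcJ : c ∈ JumpSet r ρ₁
    · have h2v : ρ₂ (gstep r ρ₁ c) = ρ₂ c - 1 := by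
        rw [hS]; exact (hJ ▸ hcJ : c ∈ JumpSet r ρ₂).2.2 m hm
      have hval := hvalJ hcJ
      omega
    · have h2v : ρ₂ (gstep r ρ₁ c) ≤ ρ₂ c := h₂.2.1 c _ hcube hle
      have hval := hvalN hcJ
      omega
  · rcases gstep_cases ρ₁ c with ⟨he, _⟩ | ⟨m, hm, _⟩
    · rw [he]; exact ⟨hc, by omega⟩
    · exact absurd ⟨m, hm⟩ hex

lemma key {r d : ℕ} {ρ₁ ρ₂ : (Fin d → ℕ) → ℤ}
    (h₁ : IsRankFunction r ρ₁) (h₁' : UnitDrop r ρ₁)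
    (h₂ : IsRankFunction r ρ₂)
    (hJ : JumpSet r ρ₁ = JumpSet r ρ₂) :
    ∀ (k : ℕ) (c : Fin d → ℕ), InCube r c →
      InCube r ((gstep r ρ₁)^[k] c) ∧
      ρ₁ c - ρ₁ ((gstep r ρ₁)^[k] c) ≤ ρ₂ c - ρ₂ ((gstep r ρ₁)^[k] c) := by
  intro k
  induction k with
  | zero => intro c hc; simp only [Function.iterate_zero, id_eq]; exact ⟨hc, by omega⟩
  | succ k ih =>
    intro c hc
    obtain ⟨hc1, hstep⟩ := step_key h₁ h₁' h₂ hJ hc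
    obtain ⟨hck, hiter⟩ := ih (gstep r ρ₁ c) hc1
    rw [Function.iterate_succ_apply]
    exact ⟨hck, by omega⟩

lemma wt_update {d : ℕ} (c : Fin d → ℕ) (m : Fin d) :
    ∑ m', Function.update c m (c m + 1) m' = (∑ m', c m') + 1 := by
  classical
  rw [Finset.sum_update_of_mem (Finset.mem_univ m)]
  rw [show (Finset.univ : Finset (Fin d)) \ {m} = Finset.univ.erase m by
    rw [Finset.erase_eq]]
  rw [← Finset.add_sum_erase _ c (Finset.mem_univ m)]
  omega

lemma eq_top {r d : ℕ} {c : Fin d → ℕ} (hc : InCube r c)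
    (hw : r * d ≤ ∑ m, c m) : c = fun _ => r := by
  by_contra h
  obtain ⟨m, hm⟩ : ∃ m, c m ≠ r := by
    by_contra h'; push_neg at h'; exact h (funext h')
  have hlt : ∑ m', c m' < ∑ _m' : Fin d, r :=
    Finset.sum_lt_sum (fun i _ => hc i)
      ⟨m, Finset.mem_univ m, lt_of_le_of_ne (hc m) hm⟩
  rw [Finset.sum_const, Finset.card_univ, Fintype.card_fin, smul_eq_mul,
    mul_comm] at hlt
  exact absurd hw (not_le.mpr hlt)

lemma reach {r d : ℕ} (ρ : (Fin d → ℕ) → ℤ) :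
    ∀ (k : ℕ) (c : Fin d → ℕ), InCube r c → r * d ≤ (∑ m, c m) + k →
      (gstep r ρ)^[k] c = fun _ => r := by
  intro k
  induction k with
  | zero =>
    intro c hc hw
    simp only [Function.iterate_zero, id_eq]
    exact eq_top hc (by simpa using hw)
  | succ k ih =>
    intro c hc hw
    rw [Function.iterate_succ_apply]
    rcases gstep_cases ρ c with ⟨he, hnex⟩ | ⟨m, hm, hS⟩
    · have hctop : ∀ m', c m' = r := by
        intro m'
        have h1 := hc m'
        have h2 : ¬(c m' + 1 ≤ r) := fun hh => hnex ⟨m', hh⟩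
        omega
      rw [he]
      apply ih c hc
      have hsum : r * d ≤ ∑ m', c m' := by
        have : ∑ m', c m' = ∑ _m' : Fin d, r :=
          Finset.sum_congr rfl (fun i _ => hctop i)
        rw [this, Finset.sum_const, Finset.card_univ, Fintype.card_fin,
          smul_eq_mul, mul_comm]
      exact le_trans hsum (Nat.le_add_right _ _)
    · rw [hS]
      apply ih _ (incube_update hc hm)
      rw [wt_update]
      omega

/-- A rank function on `□^d_r` satisfying the unit-drop property
is completely determined by its jump set: if two such rank functions have the
same jump set, they agree on the whole hypercube. -/
theorem statement_4 (r d : ℕ) (hd : 1 ≤ d)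
    (ρ₁ ρ₂ : (Fin d → ℕ) → ℤ)
    (h₁ : IsRankFunction r ρ₁) (h₁' : UnitDrop r ρ₁)
    (h₂ : IsRankFunction r ρ₂) (h₂' : UnitDrop r ρ₂)
    (hJ : JumpSet r ρ₁ = JumpSet r ρ₂) :
    ∀ i : Fin d → ℕ, InCube r i → ρ₁ i = ρ₂ i := by
  intro i hi
  have hz : InCube r (fun _ : Fin d => (0 : ℕ)) := fun m => Nat.zero_le r
  have hbound : ∀ c : Fin d → ℕ, r * d ≤ (∑ m, c m) + r * d :=
    fun c => Nat.le_add_left _ _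
  have hr1i := reach (r := r) ρ₁ (r * d) i hi (hbound i)
  have hr2i := reach (r := r) ρ₂ (r * d) i hi (hbound i)
  have hr10 := reach (r := r) ρ₁ (r * d) (fun _ : Fin d => 0) hz (hbound _)
  have hr20 := reach (r := r) ρ₂ (r * d) (fun _ : Fin d => 0) hz (hbound _)
  have k1 := (key h₁ h₁' h₂ hJ (r * d) i hi).2
  rw [hr1i] at k1
  have k2 := (key h₂ h₂' h₁ hJ.symm (r * d) i hi).2
  rw [hr2i] at k2
  have k3 := (key h₁ h₁' h₂ hJ (r * d) (fun _ : Fin d => 0) hz).2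
  rw [hr10] at k3
  have k4 := (key h₂ h₂' h₁ hJ.symm (r * d) (fun _ : Fin d => 0) hz).2
  rw [hr20] at k4
  have e1 : ρ₁ (fun _ : Fin d => 0) = (r : ℤ) := h₁.2.2.2.1
  have e2 : ρ₂ (fun _ : Fin d => 0) = (r : ℤ) := h₂.2.2.2.1
  omega
end

section
/- Let k be a field, let H be a finite-dimensional k-linear subspace of the polynomial ring k[X], and let a ∈ k. Then the set { ord_a(f) : f ∈ H, f ≠ 0 } of vanishing orders at a of the nonzero elements of H has exactly dim_k H elements. -/
set_option maxHeartbeats 1000000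
set_option synthInstance.maxHeartbeats 400000

open Polynomial

namespace Statement5Aux

variable {k : Type*} [Field k]

lemma taylor_pow_dvd {a : k} {n : ℕ} {f : Polynomial k} :
    (X - C a) ^ n ∣ f ↔ X ^ n ∣ taylor a f := by
  have hXa : taylor a (X - C a) = X := by
    rw [map_sub, taylor_X, taylor_C]; ring
  constructor
  · rintro ⟨g, rfl⟩
    refine ⟨taylor a g, ?_⟩
    calc taylor a ((X - C a) ^ n * g) = taylorAlgHom a ((X - C a) ^ n * g) := rfl
      _ = taylorAlgHom a ((X - C a) ^ n) * taylorAlgHom a g := map_mul _ _ _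
      _ = (taylor a (X - C a)) ^ n * taylor a g := by rw [map_pow]; rfl
      _ = X ^ n * taylor a g := by rw [hXa]
  · rintro ⟨g, hg⟩
    refine ⟨taylor (-a) g, ?_⟩
    have h1 : taylor (-a) (taylor a f) = f := by
      rw [taylor_taylor, neg_add_cancel, taylor_zero]
    have hX : taylor (-a) X = X - C a := by
      rw [taylor_X, map_neg]; ring
    have h2 : taylor (-a) (X ^ n * g) = (X - C a) ^ n * taylor (-a) g := by
      calc taylor (-a) (X ^ n * g) = taylorAlgHom (-a) (X ^ n * g) := rfl
        _ = taylorAlgHom (-a) (X ^ n) * taylorAlgHom (-a) g := map_mul _ _ _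
        _ = (taylor (-a) X) ^ n * taylor (-a) g := by rw [map_pow]; rfl
        _ = (X - C a) ^ n * taylor (-a) g := by rw [hX]
    rw [← h1, hg, h2]

lemma dvd_succ_iff {a : k} {n : ℕ} {f : Polynomial k} (h : (X - C a) ^ n ∣ f) :
    (X - C a) ^ (n + 1) ∣ f ↔ (taylor a f).coeff n = 0 := by
  rw [taylor_pow_dvd, X_pow_dvd_iff] at h ⊢
  constructor
  · intro hh
    exact hh n (Nat.lt_succ_self n)
  · intro hn d hd
    rcases Nat.lt_succ_iff_lt_or_eq.mp hd with hd | rfl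
    · exact h d hd
    · exact hn

end Statement5Aux

/-- For a finite-dimensional `k`-linear subspace `H` of `k[X]` and a
point `a ∈ k`, the set of vanishing orders at `a` (root multiplicities) of the
nonzero elements of `H` has exactly `dim_k H` elements. -/
theorem statement_5 {k : Type*} [Field k] (H : Submodule k (Polynomial k))
    [FiniteDimensional k H] (a : k) :
    {n : ℕ | ∃ f ∈ H, f ≠ 0 ∧ Polynomial.rootMultiplicity a f = n}.ncard
      = Module.finrank k H := by
  classical
  set S : Set ℕ := {n : ℕ | ∃ f ∈ H, f ≠ 0 ∧ Polynomial.rootMultiplicity a f = n} with hS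
  -- the filtration
  set V : ℕ → Submodule k (Polynomial k) :=
    fun n => H ⊓ Submodule.restrictScalars k (Ideal.span {(X - C a) ^ n}) with hV
  have mem_V : ∀ {n : ℕ} {f : Polynomial k}, f ∈ V n ↔ f ∈ H ∧ (X - C a) ^ n ∣ f := by
    intro n f
    simp [hV, Ideal.mem_span_singleton]
  have hVle : ∀ n, V (n + 1) ≤ V n := by
    intro n f hf
    rw [mem_V] at hf ⊢
    exact ⟨hf.1, (pow_dvd_pow _ (Nat.le_succ n)).trans hf.2⟩
  have hVH : ∀ n, V n ≤ H := fun n => inf_le_left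
  haveI : ∀ n, FiniteDimensional k (V n) := fun n =>
    Submodule.finiteDimensional_of_le (hVH n)
  -- step when n ∈ S
  have step_mem : ∀ n ∈ S, Module.finrank k (V n) = Module.finrank k (V (n + 1)) + 1 := by
    intro n hn
    obtain ⟨f, hfH, hf0, hford⟩ := hn
    set φ : V n →ₗ[k] k :=
      ((Polynomial.lcoeff k n).comp (Polynomial.taylor a)).comp (V n).subtype with hφ
    have hker : LinearMap.ker φ = (V (n + 1)).comap (V n).subtype := by
      ext ⟨g, hg⟩
      rw [mem_V] at hg
      simp only [LinearMap.mem_ker, Submodule.mem_comap, hφ, LinearMap.comp_apply,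
        Submodule.subtype_apply, Polynomial.lcoeff_apply, mem_V]
      rw [← Statement5Aux.dvd_succ_iff hg.2]
      tauto
    have hrn := LinearMap.finrank_range_add_finrank_ker φ
    have hkereq : Module.finrank k (LinearMap.ker φ) = Module.finrank k (V (n + 1)) := by
      rw [hker]
      exact (Submodule.comapSubtypeEquivOfLe (hVle n)).finrank_eq
    -- range has dimension 1
    have hfVn : f ∈ V n := mem_V.mpr ⟨hfH, hford ▸ Polynomial.pow_rootMultiplicity_dvd f a⟩
    have hφf : φ ⟨f, hfVn⟩ ≠ 0 := by
      simp only [hφ, LinearMap.comp_apply, Submodule.subtype_apply, Polynomial.lcoeff_apply]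
      intro hc
      have hdvd : (X - C a) ^ (n + 1) ∣ f :=
        (Statement5Aux.dvd_succ_iff (mem_V.mp hfVn).2).mpr hc
      have := (Polynomial.rootMultiplicity_le_iff hf0 a n).mp (le_of_eq hford)
      exact this hdvd
    have hrange1 : Module.finrank k (LinearMap.range φ) = 1 := by
      have h1 : Module.finrank k (LinearMap.range φ) ≤ 1 := by
        simpa using Submodule.finrank_le (LinearMap.range φ)
      have h2 : LinearMap.range φ ≠ ⊥ := by
        intro hc
        exact hφf (LinearMap.range_eq_bot.mp hc ▸ rfl)
      have h3 : Module.finrank k (LinearMap.range φ) ≠ 0 := by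
        simp only [ne_eq, Submodule.finrank_eq_zero]
        exact h2
      omega
    omega
  -- step when n ∉ S
  have step_not : ∀ n ∉ S, V n = V (n + 1) := by
    intro n hn
    refine le_antisymm ?_ (hVle n)
    intro f hf
    rw [mem_V] at hf
    by_cases hf0 : f = 0
    · subst hf0; exact zero_mem _
    have hord : n ≤ Polynomial.rootMultiplicity a f :=
      (Polynomial.le_rootMultiplicity_iff hf0).mpr hf.2
    have hne : Polynomial.rootMultiplicity a f ≠ n := fun hc => hn ⟨f, hf.1, hf0, hc⟩
    have hord' : n + 1 ≤ Polynomial.rootMultiplicity a f := by omega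
    exact mem_V.mpr ⟨hf.1, (Polynomial.le_rootMultiplicity_iff hf0).mp hord'⟩
  -- a degree bound for H
  obtain ⟨s, hs⟩ : H.FG := Module.Finite.iff_fg.mp ‹_›
  set N : ℕ := s.sup Polynomial.natDegree + 1 with hN
  have hdeg : ∀ f ∈ H, f.natDegree < N := by
    intro f hf
    have key : f.natDegree ≤ s.sup Polynomial.natDegree := by
      rw [← hs] at hf
      induction hf using Submodule.span_induction with
      | mem x hx => exact Finset.le_sup (Finset.mem_coe.mp hx)
      | zero => simp
      | add x y _ _ hx hy => exact (Polynomial.natDegree_add_le x y).trans (max_le hx hy)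
      | smul c x _ hx => exact (Polynomial.natDegree_smul_le c x).trans hx
    omega
  have hVN : V N = ⊥ := by
    rw [Submodule.eq_bot_iff]
    intro f hf
    by_contra hf0
    rw [mem_V] at hf
    have h1 := Polynomial.natDegree_le_of_dvd hf.2 hf0
    rw [Polynomial.natDegree_pow, Polynomial.natDegree_X_sub_C, mul_one] at h1
    have := hdeg f hf.1
    omega
  have hV0 : V 0 = H := by
    ext f
    rw [mem_V]
    simp
  -- counting by induction
  have count : ∀ m : ℕ, Module.finrank k (V 0) =
      Module.finrank k (V m) + ((Finset.range m).filter (· ∈ S)).card := by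
    intro m
    induction m with
    | zero => simp
    | succ m ih =>
      rw [Finset.range_add_one, Finset.filter_insert]
      by_cases hm : m ∈ S
      · rw [if_pos hm, Finset.card_insert_of_notMem (by simp)]
        have hst := step_mem m hm
        omega
      · rw [if_neg hm, ← step_not m hm]
        exact ih
  -- S is the coercion of the finset
  have hSsub : S = ↑((Finset.range N).filter (· ∈ S)) := by
    ext n
    simp only [Finset.coe_filter, Finset.mem_range, Set.mem_setOf_eq]
    constructor
    · intro hn
      refine ⟨?_, hn⟩
      obtain ⟨f, hfH, hf0, hford⟩ := hn
      have h1 := Polynomial.natDegree_le_of_dvd (Polynomial.pow_rootMultiplicity_dvd f a) hf0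
      rw [Polynomial.natDegree_pow, Polynomial.natDegree_X_sub_C, mul_one] at h1
      have := hdeg f hfH
      omega
    · tauto
  have hfin := count N
  rw [hVN, hV0] at hfin
  rw [hSsub, Set.ncard_coe_finset]
  simp only [finrank_bot, zero_add] at hfin
  omega
end

section
/- Let k be a field of characteristic zero, r ≥ 0 an integer, and f_0, …, f_r ∈ k⟦t⟧ nonzero formal power series whose orders s_i = ord(f_i) satisfy s_0 < s_1 < ⋯ < s_r. Then the Wronskian Wr(f_0,…,f_r) = det( ((d/dt)^j f_i)_{0 ≤ i,j ≤ r} ) is nonzero and its order equals s_0 + s_1 + ⋯ + s_r − r(r+1)/2. -/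
/-!
Multiplying column `j` of the Wronskian matrix by `X ^ j` turns its entries into `X ^ j * D ^ j f_i`,
whose `m`-th coefficient is `m (m - 1) ⋯ (m - j + 1) · coeff m f_i`. Hence row `i` is divisible
by `X ^ s_i`, and after factoring out these powers the constant term of the remaining determinant
is `∏ coeff s_i f_i` times `det ((s_i)(s_i - 1) ⋯ (s_i - j + 1))_{i,j}`, a Vandermonde determinant
in the distinct values `s_i` up to column operations. So `X ^ (r(r+1)/2) · Wr = X ^ (∑ s_i) · g`
with `g(0) ≠ 0`.
-/

/-- The Wronskian of the power series `f_0, …, f_r`: the determinant of the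
`(r+1) × (r+1)` matrix whose `(i,j)` entry is the `j`-th formal derivative of
`f_i`. -/
noncomputable def psWronskian {k : Type*} [CommRing k] (r : ℕ)
    (f : Fin (r + 1) → PowerSeries k) : PowerSeries k :=
  (Matrix.of fun i j : Fin (r + 1) =>
    (PowerSeries.derivativeFun)^[(j : ℕ)] (f i)).det

open PowerSeries Matrix

namespace PowerSeries

variable {R : Type*} [CommRing R]

theorem coeff_X_pow_mul_iterate_derivative (f : R⟦X⟧) (j m : ℕ) :
    coeff m (X ^ j * (d⁄dX R)^[j] f) = (m.descFactorial j : R) * coeff m f := by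
  rw [coeff_X_pow_mul']
  split_ifs with hjm
  · rw [coeff_iterate_derivative, ← Nat.add_descFactorial_eq_ascFactorial, Nat.sub_add_cancel hjm]
  · rw [Nat.descFactorial_eq_zero_iff_lt.mpr (not_le.mp hjm), Nat.cast_zero, zero_mul]

theorem X_pow_dvd_X_pow_mul_iterate_derivative {f : R⟦X⟧} {s : ℕ} (hf : X ^ s ∣ f) (j : ℕ) :
    X ^ s ∣ X ^ j * (d⁄dX R)^[j] f := by
  rw [X_pow_dvd_iff] at hf ⊢
  intro m hm
  rw [coeff_X_pow_mul_iterate_derivative, hf m hm, mul_zero]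

end PowerSeries

theorem prod_X_pow_fin_val {R : Type*} [CommRing R] (r : ℕ) :
    ∏ j : Fin (r + 1), (X : R⟦X⟧) ^ (j : ℕ) = X ^ (r * (r + 1) / 2) := by
  rw [Finset.prod_pow_eq_pow_sum, Fin.sum_univ_eq_sum_range (fun j => j), Finset.sum_range_id,
    Nat.add_sub_cancel, Nat.mul_comm]

theorem X_pow_mul_psWronskian {R : Type*} [CommRing R] (r : ℕ) (f : Fin (r + 1) → R⟦X⟧) :
    X ^ (r * (r + 1) / 2) * psWronskian r f =
      (of fun i j : Fin (r + 1) => X ^ (j : ℕ) * (d⁄dX R)^[j] (f i)).det := by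
  rw [psWronskian, ← prod_X_pow_fin_val, ← det_mul_row]
  rfl

theorem det_descFactorial_ne_zero {R : Type*} [CommRing R] [IsDomain R] [CharZero R] {n : ℕ}
    {s : Fin n → ℕ} (hs : Function.Injective s) :
    (of fun i j : Fin n => ((s i).descFactorial j : R)).det ≠ 0 := by
  have hdesc : (of fun i j : Fin n => ((s i).descFactorial j : R)) =
      of fun i j : Fin n => (descPochhammer R j).eval (s i : R) := by
    ext i j
    simp only [of_apply, descPochhammer_eval_eq_descFactorial]
  rw [hdesc, ← det_eval_matrixOfPolynomials_eq_det_vandermonde _ _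
    (fun j => descPochhammer_natDegree R j) (fun j => monic_descPochhammer R j),
    det_vandermonde_ne_zero_iff]
  exact Nat.cast_injective.comp hs

theorem exists_X_pow_mul_psWronskian_eq {R : Type*} [CommRing R] (r : ℕ)
    (f : Fin (r + 1) → R⟦X⟧) (s : Fin (r + 1) → ℕ) (hf : ∀ i, X ^ s i ∣ f i) :
    ∃ g : R⟦X⟧, X ^ (r * (r + 1) / 2) * psWronskian r f = X ^ (∑ i, s i) * g ∧
      constantCoeff g =
        (∏ i, coeff (s i) (f i)) * (of fun i j : Fin (r + 1) => ((s i).descFactorial j : R)).det := by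
  choose G hG using fun i (j : Fin (r + 1)) =>
    X_pow_dvd_X_pow_mul_iterate_derivative (hf i) j
  refine ⟨(of G).det, ?_, ?_⟩
  · rw [X_pow_mul_psWronskian, ← Finset.prod_pow_eq_pow_sum, ← det_mul_column]
    simp only [hG, of_apply]
  · have hG0 : ∀ i j, constantCoeff (G i j) = coeff (s i) (f i) * (s i).descFactorial j := by
      intro i j
      rw [← coeff_zero_eq_constantCoeff_apply, ← coeff_X_pow_mul _ (s i), zero_add, ← hG,
        coeff_X_pow_mul_iterate_derivative, mul_comm]
    rw [RingHom.map_det, ← det_mul_column]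
    congr 1
    ext i j
    simp only [RingHom.mapMatrix_apply, map_apply, of_apply, hG0]

theorem statement_8_general {k : Type*} [Field k] [CharZero k] (r : ℕ)
    (f : Fin (r + 1) → PowerSeries k) (s : Fin (r + 1) → ℕ)
    (hord : ∀ i, (f i).order = (s i : ℕ∞))
    (hs : StrictMono s) :
    psWronskian r f ≠ 0 ∧
      (psWronskian r f).order + ((r * (r + 1) / 2 : ℕ) : ℕ∞)
        = ((∑ i, s i : ℕ) : ℕ∞) := by
  have hlead : ∀ i, coeff (s i) (f i) ≠ 0 := fun i => (order_eq_nat.mp (hord i)).1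
  have hdvd : ∀ i, X ^ s i ∣ f i := fun i => X_pow_dvd_iff.mpr (order_eq_nat.mp (hord i)).2
  obtain ⟨g, hWg, hg0⟩ := exists_X_pow_mul_psWronskian_eq r f s hdvd
  have hg : g.order = 0 := by
    refine order_eq_nat.mpr ⟨?_, fun i hi => absurd hi (Nat.not_lt_zero i)⟩
    rw [coeff_zero_eq_constantCoeff_apply, hg0]
    exact mul_ne_zero (Finset.prod_ne_zero_iff.mpr fun i _ => hlead i)
      (det_descFactorial_ne_zero hs.injective)
  have horder : (psWronskian r f).order + ((r * (r + 1) / 2 : ℕ) : ℕ∞) = ((∑ i, s i : ℕ) : ℕ∞) :=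
    calc _ = (X ^ (r * (r + 1) / 2) * psWronskian r f).order := by
          rw [order_mul, order_X_pow, add_comm]
      _ = ((∑ i, s i : ℕ) : ℕ∞) := by rw [hWg, order_mul, order_X_pow, hg, add_zero]
  refine ⟨fun hW => ?_, horder⟩
  rw [hW, order_zero, top_add] at horder
  exact ENat.top_ne_natCast _ horder

/-- Over a field of characteristic zero, if `f_0, …, f_r` are
nonzero power series with strictly increasing orders `s_0 < s_1 < ⋯ < s_r`,
then their Wronskian is nonzero and has order `s_0 + ⋯ + s_r - r(r+1)/2`
(stated additively: `ord(Wr) + r(r+1)/2 = s_0 + ⋯ + s_r`). -/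
theorem statement_8 {k : Type*} [Field k] [CharZero k] (r : ℕ)
    (f : Fin (r + 1) → PowerSeries k) (s : Fin (r + 1) → ℕ)
    (hf : ∀ i, f i ≠ 0) (hord : ∀ i, (f i).order = (s i : ℕ∞))
    (hs : StrictMono s) :
    psWronskian r f ≠ 0 ∧
      (psWronskian r f).order + ((r * (r + 1) / 2 : ℕ) : ℕ∞)
        = ((∑ i, s i : ℕ) : ℕ∞) :=
  statement_8_general r f s hord hs
end

section
/- Let k be an algebraically closed field of characteristic zero and let H be a k-linear subspace of k[X] of dimension r+1. For a ∈ k, let s_0^a < ⋯ < s_r^a be the elements of { ord_a(f) : f ∈ H, f ≠ 0 } and define the weight w(a) = s_0^a + ⋯ + s_r^a − r(r+1)/2. Let d_0 < d_1 < ⋯ < d_r be the elements of the set { deg(f) : f ∈ H, f ≠ 0 } (which has exactly r+1 elements). Then w(a) ≥ 0 for all a, w(a) = 0 for all but finitely many a ∈ k, and the total weight satisfies Σ_{a ∈ k} w(a) = d_0 + d_1 + ⋯ + d_r − r(r+1)/2. -/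
/-- The set of vanishing orders at `a` of nonzero elements of a space `H` of
polynomials. -/
def ordersAt {k : Type*} [CommRing k] (H : Submodule k (Polynomial k))
    (a : k) : Set ℕ :=
  {n : ℕ | ∃ f ∈ H, f ≠ 0 ∧ Polynomial.rootMultiplicity a f = n}

/-- The Weierstrass weight of `a ∈ k` with respect to `H`: the sum
`s_0^a + ⋯ + s_r^a` of the vanishing orders at `a` of nonzero elements of `H`,
minus `r(r+1)/2`. -/
noncomputable def weight {k : Type*} [CommRing k] (r : ℕ)
    (H : Submodule k (Polynomial k)) (a : k) : ℤ :=
  (∑ᶠ n ∈ ordersAt H a, (n : ℤ)) - r * (r + 1) / 2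

/-- The set of degrees of nonzero elements of a space `H` of polynomials. -/
def degreesOf {k : Type*} [CommRing k] (H : Submodule k (Polynomial k)) : Set ℕ :=
  {n : ℕ | ∃ f ∈ H, f ≠ 0 ∧ f.natDegree = n}

/-! The Wronskian `W` of a basis of `H` changes only by a nonzero scalar under a change of basis.
Since `X ^ j * D ^ j` multiplies `X ^ l` by the falling factorial `l (l - 1) ⋯ (l - j + 1)`,
rescaling the columns of the Wronskian matrix by `X ^ j` turns its extreme coefficients into
Vandermonde-type determinants in the exponents, nonzero in characteristic zero. In a basis
with distinct degrees `d_i` this gives `deg W = Σ d_i - r(r+1)/2`; in a basis with distinct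
vanishing orders `s_i^a` at `a` it gives `ord_a W = Σ s_i^a - r(r+1)/2 = w(a)`. Summing `ord_a W`
over the algebraically closed field gives `deg W`. -/

open Polynomial Matrix

section AdaptedFamily

variable {k V : Type*} [Field k] [AddCommGroup V] [Module k V]

theorem linearIndependent_of_det_ne_zero {ι : Type*} [Fintype ι] [DecidableEq ι] (g : ι → V)
    (ℓ : ι → V →ₗ[k] k) (h : (of fun i j => ℓ j (g i)).det ≠ 0) : LinearIndependent k g :=
  LinearIndependent.of_comp (LinearMap.pi ℓ) (linearIndependent_rows_of_det_ne_zero h)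

def valueSet (H : Submodule k V) (ν : V → ℕ) : Set ℕ :=
  {n | ∃ f ∈ H, f ≠ 0 ∧ ν f = n}

variable (H : Submodule k V) (ν : V → ℕ)

theorem exists_strictMono_of_subset_valueSet (T : Finset ℕ) (hT : ↑T ⊆ valueSet H ν) :
    ∃ g : Fin T.card → V, (∀ i, g i ∈ H) ∧ (∀ i, g i ≠ 0) ∧ StrictMono (ν ∘ g) ∧
      Set.range (ν ∘ g) = T := by
  choose p hpH hp0 hpν using fun n : T => hT n.2
  set e := T.orderIsoOfFin rfl
  have hν : ∀ i, ν (p (e i)) = e i := fun i => hpν (e i)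
  refine ⟨fun i => p (e i), fun i => hpH _, fun i => hp0 _, fun i j hij => ?_, ?_⟩
  · simpa only [Function.comp_apply, hν] using Subtype.coe_lt_coe.2 (e.strictMono hij)
  · ext n
    simp only [Set.mem_range, Function.comp_apply, hν, Finset.mem_coe]
    exact ⟨fun ⟨i, hi⟩ => hi ▸ (e i).2, fun hn => ⟨e.symm ⟨n, hn⟩, by simp⟩⟩

variable [FiniteDimensional k H]
  (hli : ∀ {m : ℕ} (g : Fin m → V), (∀ i, g i ≠ 0) → StrictMono (ν ∘ g) → LinearIndependent k g)
include hli

theorem card_le_finrank_of_subset_valueSet (T : Finset ℕ) (hT : ↑T ⊆ valueSet H ν) :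
    T.card ≤ Module.finrank k H := by
  obtain ⟨g, hgH, hg0, hmono, -⟩ := exists_strictMono_of_subset_valueSet H ν T hT
  calc T.card = Module.finrank k (Submodule.span k (Set.range g)) := by
        rw [finrank_span_eq_card (hli g hg0 hmono), Fintype.card_fin]
    _ ≤ Module.finrank k H :=
        Submodule.finrank_mono (Submodule.span_le.2 (Set.range_subset_iff.2 hgH))

theorem valueSet_finite : (valueSet H ν).Finite := by
  by_contra hinf
  obtain ⟨T, hT, hcard⟩ := Set.Infinite.exists_subset_card_eq hinf (Module.finrank k H + 1)
  have := card_le_finrank_of_subset_valueSet H ν hli T hT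
  omega

theorem exists_adapted_family (ℓ : ℕ → V →ₗ[k] k)
    (hpiv : ∀ f ∈ H, f ≠ 0 → ℓ (ν f) f ≠ 0) :
    ∃ (m : ℕ) (g : Fin m → V), m = Module.finrank k H ∧ (∀ i, g i ≠ 0) ∧
      StrictMono (ν ∘ g) ∧ Submodule.span k (Set.range g) = H ∧
      Set.range (ν ∘ g) = valueSet H ν := by
  set T := (valueSet_finite H ν hli).toFinset
  obtain ⟨g, hgH, hg0, hmono, hrange⟩ :=
    exists_strictMono_of_subset_valueSet H ν T (by simp [T])
  have hspan_le : Submodule.span k (Set.range g) ≤ H :=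
    Submodule.span_le.2 (Set.range_subset_iff.2 hgH)
  have hspan_rank : Module.finrank k (Submodule.span k (Set.range g)) = T.card := by
    rw [finrank_span_eq_card (hli g hg0 hmono), Fintype.card_fin]
  -- reading off the pivot coefficients embeds `H` into `k ^ T`
  have hrank_le : Module.finrank k H ≤ T.card := by
    let L : H →ₗ[k] (T → k) := (LinearMap.pi fun n : T => ℓ n) ∘ₗ H.subtype
    have hL : Function.Injective L := by
      refine (injective_iff_map_eq_zero L).2 fun f hf => ?_
      by_contra hf0
      have hfT : ν f ∈ T := by
        simpa [T] using ⟨f, f.2, by simpa using hf0, rfl⟩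
      exact hpiv f f.2 (by simpa using hf0) (congr_fun hf ⟨ν f, hfT⟩)
    simpa using LinearMap.finrank_le_finrank_of_injective hL
  have hcard : T.card = Module.finrank k H :=
    le_antisymm (hspan_rank ▸ Submodule.finrank_mono hspan_le) hrank_le
  exact ⟨T.card, g, hcard, hg0, hmono,
    Submodule.eq_of_le_of_finrank_eq hspan_le (hspan_rank.trans hcard),
    by simpa [T] using hrange⟩

end AdaptedFamily

namespace Polynomial

section CommRing

variable {R : Type*} [CommRing R]

theorem coeff_prod_sum_of_natDegree_le {ι : Type*} (s : Finset ι) (f : ι → R[X]) (d : ι → ℕ)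
    (h : ∀ i ∈ s, (f i).natDegree ≤ d i) :
    (∏ i ∈ s, f i).coeff (∑ i ∈ s, d i) = ∏ i ∈ s, (f i).coeff (d i) := by
  induction s using Finset.cons_induction with
  | empty => simp
  | cons a s ha ih =>
    have hs : ∀ i ∈ s, (f i).natDegree ≤ d i := fun i hi => h i (Finset.mem_cons_of_mem hi)
    rw [Finset.prod_cons, Finset.sum_cons, Finset.prod_cons, ← ih hs]
    exact coeff_mul_add_eq_of_natDegree_le (h a (Finset.mem_cons_self a s))
      ((natDegree_prod_le s f).trans (Finset.sum_le_sum hs))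

section Det

variable {n : Type*} [Fintype n] [DecidableEq n]

theorem natDegree_det_le_sum (N : Matrix n n R[X]) (d : n → ℕ)
    (h : ∀ i j, (N i j).natDegree ≤ d i) : N.det.natDegree ≤ ∑ i, d i := by
  rw [det_apply']
  refine natDegree_sum_le_of_forall_le _ _ fun σ _ => ?_
  refine natDegree_mul_le.trans ?_
  rw [natDegree_intCast, zero_add, ← Equiv.sum_comp σ d]
  exact (natDegree_prod_le _ _).trans (Finset.sum_le_sum fun i _ => h _ _)

theorem coeff_det_sum_of_natDegree_le (N : Matrix n n R[X]) (d : n → ℕ)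
    (h : ∀ i j, (N i j).natDegree ≤ d i) :
    N.det.coeff (∑ i, d i) = (of fun i j => (N i j).coeff (d i)).det := by
  rw [det_apply', det_apply', finsetSum_coeff]
  refine Finset.sum_congr rfl fun σ _ => ?_
  rw [← Equiv.sum_comp σ d, coeff_intCast_mul,
    coeff_prod_sum_of_natDegree_le _ _ _ fun i _ => h _ _]
  rfl

theorem exists_det_eq_X_pow_mul (N : Matrix n n R[X]) (s : n → ℕ)
    (h : ∀ i j, X ^ s i ∣ N i j) :
    ∃ q : R[X], N.det = X ^ (∑ i, s i) * q ∧
      q.coeff 0 = (of fun i j => (N i j).coeff (s i)).det := by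
  choose Q hQ using h
  have hN : N = diagonal (fun i => X ^ s i) * of Q := by
    ext i j
    rw [diagonal_mul, of_apply, hQ]
  refine ⟨(of Q).det, by rw [hN, det_mul, det_diagonal, Finset.prod_pow_eq_pow_sum], ?_⟩
  rw [← constantCoeff_apply, RingHom.map_det]
  congr 1
  ext i j
  simpa [hQ i j] using (coeff_X_pow_mul (Q i j) (s i) 0).symm

end Det

theorem iterate_derivative_taylor (a : R) (p : R[X]) (j : ℕ) :
    derivative^[j] (taylor a p) = taylor a (derivative^[j] p) := by
  induction j with
  | zero => rfl
  | succ j ih =>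
    rw [Function.iterate_succ_apply', ih, Function.iterate_succ_apply', taylor_apply,
      taylor_apply, derivative_comp]
    simp

theorem rootMultiplicity_eq_natTrailingDegree_taylor (a : R) (f : R[X]) :
    rootMultiplicity a f = (taylor a f).natTrailingDegree := by
  rw [rootMultiplicity_eq_natTrailingDegree, taylor_apply]

variable {m : ℕ}

noncomputable def wronskianMatrix (g : Fin m → R[X]) : Matrix (Fin m) (Fin m) R[X] :=
  of fun i j => derivative^[j] (g i)

noncomputable def scaledWronskianMatrix (g : Fin m → R[X]) : Matrix (Fin m) (Fin m) R[X] :=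
  of fun i j => X ^ (j : ℕ) * derivative^[j] (g i)

theorem coeff_scaledWronskianMatrix (g : Fin m → R[X]) (i j : Fin m) (l : ℕ) :
    (scaledWronskianMatrix g i j).coeff l = l.descFactorial j • (g i).coeff l := by
  rw [scaledWronskianMatrix, of_apply]
  rcases lt_or_ge l j with hlj | hjl
  · rw [coeff_X_pow_mul', if_neg hlj.not_ge, Nat.descFactorial_eq_zero_iff_lt.2 hlj, zero_smul]
  · obtain ⟨l, rfl⟩ := Nat.exists_eq_add_of_le' hjl
    rw [coeff_X_pow_mul, coeff_iterate_derivative]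

theorem det_wronskianMatrix_mul_X_pow (g : Fin m → R[X]) :
    (wronskianMatrix g).det * X ^ (∑ j : Fin m, (j : ℕ)) = (scaledWronskianMatrix g).det := by
  rw [← Finset.prod_pow_eq_pow_sum, ← det_diagonal, ← det_mul]
  congr 1
  ext i j : 1
  simp [wronskianMatrix, scaledWronskianMatrix, mul_comm]

theorem taylor_det_wronskianMatrix (a : R) (g : Fin m → R[X]) :
    taylor a (wronskianMatrix g).det = (wronskianMatrix fun i => taylor a (g i)).det := by
  change taylorAlgHom a (wronskianMatrix g).det = _
  rw [AlgHom.map_det]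
  congr 1
  ext i j : 1
  exact (iterate_derivative_taylor a (g i) j).symm

theorem exists_det_wronskianMatrix_eq_C_mul {g h : Fin m → R[X]}
    (hh : ∀ i, h i ∈ Submodule.span R (Set.range g)) :
    ∃ c : R, (wronskianMatrix h).det = C c * (wronskianMatrix g).det := by
  choose A hA using fun i => (Submodule.mem_span_range_iff_exists_fun R).1 (hh i)
  have hW : wronskianMatrix h = (of A).map C * wronskianMatrix g := by
    ext i j
    simp [wronskianMatrix, mul_apply, ← hA i, iterate_derivative_sum, smul_eq_C_mul]
  exact ⟨(of A).det, by rw [hW, det_mul, RingHom.map_det, RingHom.mapMatrix_apply]⟩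

end CommRing

section Field

variable {k : Type*} [Field k]

theorem coeff_taylor_rootMultiplicity_ne_zero (a : k) {f : k[X]} (hf : f ≠ 0) :
    (taylor a f).coeff (rootMultiplicity a f) ≠ 0 := by
  rw [rootMultiplicity_eq_natTrailingDegree_taylor]
  exact trailingCoeff_nonzero_iff_nonzero.2 ((taylor_eq_zero a f).not.2 hf)

theorem linearIndependent_of_strictMono_natDegree {m : ℕ} (g : Fin m → k[X])
    (hg : ∀ i, g i ≠ 0) (hmono : StrictMono (natDegree ∘ g)) : LinearIndependent k g := by
  refine linearIndependent_of_det_ne_zero g (fun j => lcoeff k (g j).natDegree) ?_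
  have htri : (of fun i j => lcoeff k (g j).natDegree (g i)).IsLowerTriangular :=
    fun i j hij => coeff_eq_zero_of_natDegree_lt (hmono (OrderDual.toDual_lt_toDual.1 hij))
  rw [det_of_isLowerTriangular _ htri]
  exact Finset.prod_ne_zero_iff.2 fun i _ => leadingCoeff_ne_zero.2 (hg i)

theorem linearIndependent_of_strictMono_rootMultiplicity (a : k) {m : ℕ} (g : Fin m → k[X])
    (hg : ∀ i, g i ≠ 0) (hmono : StrictMono (rootMultiplicity a ∘ g)) :
    LinearIndependent k g := by
  refine linearIndependent_of_det_ne_zero g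
    (fun j => lcoeff k (rootMultiplicity a (g j)) ∘ₗ taylor a) ?_
  have htri : (of fun i j =>
      (lcoeff k (rootMultiplicity a (g j)) ∘ₗ taylor a) (g i)).IsUpperTriangular :=
    fun i j hij => coeff_eq_zero_of_lt_natTrailingDegree <|
      rootMultiplicity_eq_natTrailingDegree_taylor a (g i) ▸ hmono hij
  rw [det_of_isUpperTriangular htri]
  exact Finset.prod_ne_zero_iff.2 fun i _ => coeff_taylor_rootMultiplicity_ne_zero a (hg i)

theorem finsum_rootMultiplicity [IsAlgClosed k] {M : Type*} [AddCommMonoidWithOne M]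
    {p : k[X]} (hp : p ≠ 0) : ∑ᶠ a, (rootMultiplicity a p : M) = p.natDegree := by
  classical
  have hsupp : Function.support (fun a => (rootMultiplicity a p : M)) ⊆ p.roots.toFinset :=
    fun a ha => by
      have : rootMultiplicity a p ≠ 0 := fun h0 => ha (by simp [h0])
      simpa [mem_roots hp, ← rootMultiplicity_pos hp, hp] using Nat.pos_of_ne_zero this
  rw [finsum_eq_sum_of_support_subset _ hsupp, ← Nat.cast_sum,
    ← IsAlgClosed.card_roots_eq_natDegree, ← Multiset.toFinset_sum_count_eq]
  simp_rw [count_roots]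

variable [CharZero k] {m : ℕ}

theorem det_descFactorial_mul_ne_zero {s : Fin m → ℕ} (hs : Function.Injective s)
    {c : Fin m → k} (hc : ∀ i, c i ≠ 0) :
    (of fun i j : Fin m => ((s i).descFactorial j : k) * c i).det ≠ 0 := by
  have hvdm := det_eval_matrixOfPolynomials_eq_det_vandermonde (fun i => (s i : k))
    (fun j : Fin m => descPochhammer k j) (fun j => descPochhammer_natDegree k j)
    (fun j => monic_descPochhammer k j)
  simp only [descPochhammer_eval_eq_descFactorial] at hvdm
  have hsplit : (of fun i j : Fin m => ((s i).descFactorial j : k) * c i) =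
      diagonal c * of fun i j : Fin m => ((s i).descFactorial j : k) := by
    ext i j
    rw [diagonal_mul, of_apply, of_apply, mul_comm]
  rw [hsplit, det_mul, det_diagonal, ← hvdm]
  exact mul_ne_zero (Finset.prod_ne_zero_iff.2 fun i _ => hc i)
    (det_vandermonde_ne_zero_iff.2 (Nat.cast_injective.comp hs))

theorem natDegree_det_wronskianMatrix {g : Fin m → k[X]} (hg : ∀ i, g i ≠ 0)
    (hinj : Function.Injective fun i => (g i).natDegree) :
    (wronskianMatrix g).det ≠ 0 ∧
      (wronskianMatrix g).det.natDegree + ∑ j : Fin m, (j : ℕ) = ∑ i, (g i).natDegree := by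
  have hdeg : ∀ i j, (scaledWronskianMatrix g i j).natDegree ≤ (g i).natDegree :=
    fun i j => natDegree_le_iff_coeff_eq_zero.2 fun l hl => by
      rw [coeff_scaledWronskianMatrix, coeff_eq_zero_of_natDegree_lt hl, smul_zero]
  have htop : (scaledWronskianMatrix g).det.coeff (∑ i, (g i).natDegree) ≠ 0 := by
    rw [coeff_det_sum_of_natDegree_le _ _ hdeg]
    simpa only [coeff_scaledWronskianMatrix, nsmul_eq_mul, coeff_natDegree] using
      det_descFactorial_mul_ne_zero hinj fun i => leadingCoeff_ne_zero.2 (hg i)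
  have hW : (wronskianMatrix g).det ≠ 0 := fun h0 => by
    simp [← det_wronskianMatrix_mul_X_pow, h0] at htop
  refine ⟨hW, ?_⟩
  rw [← natDegree_mul_X_pow _ hW, det_wronskianMatrix_mul_X_pow]
  exact le_antisymm (natDegree_det_le_sum _ _ hdeg) (le_natDegree_of_ne_zero htop)

theorem natTrailingDegree_det_wronskianMatrix {g : Fin m → k[X]} (hg : ∀ i, g i ≠ 0)
    (hinj : Function.Injective fun i => (g i).natTrailingDegree) :
    (wronskianMatrix g).det ≠ 0 ∧ (wronskianMatrix g).det.natTrailingDegree +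
      ∑ j : Fin m, (j : ℕ) = ∑ i, (g i).natTrailingDegree := by
  have hdvd : ∀ i j, X ^ (g i).natTrailingDegree ∣ scaledWronskianMatrix g i j :=
    fun i j => X_pow_dvd_iff.2 fun l hl => by
      rw [coeff_scaledWronskianMatrix, coeff_eq_zero_of_lt_natTrailingDegree hl, smul_zero]
  obtain ⟨q, hq, hq_coeff⟩ := exists_det_eq_X_pow_mul _ _ hdvd
  have hq0 : q.coeff 0 ≠ 0 := by
    simpa only [hq_coeff, coeff_scaledWronskianMatrix, nsmul_eq_mul, trailingCoeff] using
      det_descFactorial_mul_ne_zero hinj fun i => trailingCoeff_nonzero_iff_nonzero.2 (hg i)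
  have hqne : q ≠ 0 := fun h0 => hq0 (by rw [h0, coeff_zero])
  have hW : (wronskianMatrix g).det ≠ 0 := fun h0 => by
    simp [← det_wronskianMatrix_mul_X_pow, h0, hqne] at hq
  refine ⟨hW, ?_⟩
  rw [← natTrailingDegree_mul_X_pow hW, det_wronskianMatrix_mul_X_pow, hq, mul_comm,
    natTrailingDegree_mul_X_pow hqne, natTrailingDegree_eq_zero_of_constantCoeff_ne_zero hq0,
    zero_add]

theorem rootMultiplicity_det_wronskianMatrix (a : k) {g : Fin m → k[X]} (hg : ∀ i, g i ≠ 0)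
    (hinj : Function.Injective fun i => rootMultiplicity a (g i)) :
    (wronskianMatrix g).det ≠ 0 ∧ rootMultiplicity a (wronskianMatrix g).det +
      ∑ j : Fin m, (j : ℕ) = ∑ i, rootMultiplicity a (g i) := by
  simp only [rootMultiplicity_eq_natTrailingDegree_taylor, taylor_det_wronskianMatrix] at hinj ⊢
  obtain ⟨hW, htrail⟩ :=
    natTrailingDegree_det_wronskianMatrix (fun i => (taylor_eq_zero a (g i)).not.2 (hg i)) hinj
  refine ⟨fun h0 => hW ?_, htrail⟩
  rw [← taylor_det_wronskianMatrix, h0, map_zero]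

end Field

end Polynomial

theorem finsum_mem_range_sub_triangle {r q : ℕ} {f : Fin (r + 1) → ℕ}
    (hf : Function.Injective f) (hq : q + ∑ j : Fin (r + 1), (j : ℕ) = ∑ i, f i) :
    (∑ᶠ n ∈ Set.range f, (n : ℤ)) - r * (r + 1) / 2 = q := by
  have hgauss : (∑ j : Fin (r + 1), (j : ℕ)) * 2 = r * (r + 1) := by
    rw [Fin.sum_univ_eq_sum_range (fun j => j) (r + 1), Finset.sum_range_id_mul_two,
      Nat.add_sub_cancel, mul_comm]
  have htriangle : (r : ℤ) * (r + 1) / 2 = ∑ j : Fin (r + 1), (j : ℕ) := by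
    have h2 : (r : ℤ) * (r + 1) = ((∑ j : Fin (r + 1), (j : ℕ) : ℕ) : ℤ) * 2 := by
      exact_mod_cast hgauss.symm
    rw [h2, Int.mul_ediv_cancel _ two_ne_zero]
  rw [finsum_mem_range hf, finsum_eq_sum_of_fintype, htriangle]
  push_cast at hq ⊢
  linarith

theorem weight_eq_rootMultiplicity {k : Type*} [Field k] [CharZero k] {r : ℕ}
    (H : Submodule k k[X]) [FiniteDimensional k H] (hdim : Module.finrank k H = r + 1)
    {h : Fin (r + 1) → k[X]} (hh : ∀ i, h i ∈ H) (hW : (wronskianMatrix h).det ≠ 0) (a : k) :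
    weight r H a = rootMultiplicity a (wronskianMatrix h).det := by
  obtain ⟨m, g, hm, hg0, hmono, hspan, hrange⟩ := exists_adapted_family H (rootMultiplicity a)
    (linearIndependent_of_strictMono_rootMultiplicity a) (fun n => lcoeff k n ∘ₗ taylor a)
    fun f _ hf => coeff_taylor_rootMultiplicity_ne_zero a hf
  obtain rfl : m = r + 1 := hm.trans hdim
  obtain ⟨-, hord⟩ := rootMultiplicity_det_wronskianMatrix a hg0 hmono.injective
  obtain ⟨c, hc⟩ := exists_det_wronskianMatrix_eq_C_mul fun i => hspan.symm ▸ hh i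
  have horders : ordersAt H a = Set.range (rootMultiplicity a ∘ g) := hrange.symm
  rw [hc, rootMultiplicity_mul (hc ▸ hW), rootMultiplicity_C, zero_add, weight, horders]
  exact finsum_mem_range_sub_triangle hmono.injective hord

/-- Over an algebraically closed field of characteristic zero, for
an `(r+1)`-dimensional subspace `H ⊆ k[X]`, the weight `w(a)` is nonnegative for
every `a`, vanishes for all but finitely many `a ∈ k`, the set of degrees
`d_0 < ⋯ < d_r` of nonzero elements of `H` has exactly `r + 1` elements, and the
total weight is `Σ_a w(a) = d_0 + d_1 + ⋯ + d_r - r(r+1)/2`. -/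
theorem statement_12 {k : Type*} [Field k] [IsAlgClosed k] [CharZero k] (r : ℕ)
    (H : Submodule k (Polynomial k)) [FiniteDimensional k H]
    (hdim : Module.finrank k H = r + 1) :
    (∀ a : k, 0 ≤ weight r H a) ∧
    {a : k | weight r H a ≠ 0}.Finite ∧
    (degreesOf H).ncard = r + 1 ∧
    ∑ᶠ a : k, weight r H a = (∑ᶠ n ∈ degreesOf H, (n : ℤ)) - r * (r + 1) / 2 := by
  obtain ⟨m, h, hm, hh0, hmono, hspan, hrange⟩ := exists_adapted_family H natDegree
    linearIndependent_of_strictMono_natDegree (lcoeff k) fun f _ hf => leadingCoeff_ne_zero.2 hf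
  obtain rfl : m = r + 1 := hm.trans hdim
  obtain ⟨hP, hdeg⟩ := natDegree_det_wronskianMatrix hh0 hmono.injective
  have hweight := weight_eq_rootMultiplicity H hdim
    (fun i => hspan ▸ Submodule.subset_span ⟨i, rfl⟩) hP
  have hdegrees : degreesOf H = Set.range (natDegree ∘ h) := hrange.symm
  refine ⟨fun a => hweight a ▸ Int.natCast_nonneg _, ?_, ?_, ?_⟩
  · refine (finite_setOfPred_isRoot hP).subset fun a (ha : weight r H a ≠ 0) => ?_
    rwa [hweight, Nat.cast_ne_zero, ← pos_iff_ne_zero, rootMultiplicity_pos hP] at ha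
  · rw [hdegrees, Set.ncard_range_of_injective hmono.injective, Nat.card_eq_fintype_card,
      Fintype.card_fin]
  · rw [finsum_congr hweight, finsum_rootMultiplicity hP, hdegrees,
      finsum_mem_range_sub_triangle hmono.injective hdeg]
end

section
/- Let d ≥ 1 and g be integers, and let S be an additive subsemigroup of ℕ × ℤ such that: (i) the subgroup of ℤ × ℤ generated by S is all of ℤ × ℤ; (ii) there is a constant C with |s| ≤ Cn for every (n,s) ∈ S with n ≥ 1; (iii) there is n₀ ≥ 1 such that for every n ≥ n₀ the slice S_n := { s ∈ ℤ : (n,s) ∈ S } is finite of cardinality dn − g + 1. Then the limits s_min = lim_{n→∞} (min S_n)/n and s_max = lim_{n→∞} (max S_n)/n exist as real numbers, and s_max − s_min = d. Consequently, the closure of the convex hull Λ of { s/n : (n,s) ∈ S, n ≥ 1 } in ℝ is the compact interval [s_min, s_max] of length d. -/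
open Filter

/-- The `n`-th sgSlice of a subset `S ⊆ ℕ × ℤ`. -/
def sgSlice (S : Set (ℕ × ℤ)) (n : ℕ) : Set ℤ := {s : ℤ | (n, s) ∈ S}

/-- The `n`-th sgSlice viewed as a set of real numbers. -/
def sgSliceR (S : Set (ℕ × ℤ)) (n : ℕ) : Set ℝ := (fun s : ℤ => (s : ℝ)) '' sgSlice S n

/-!
For large `n` the slice `S_n` is finite and nonempty, with extremes `a_n ≤ b_n`. Since
`S_m + S_n ⊆ S_{m+n}`, the sequence `a` is subadditive and `b` superadditive, so by Fekete's
lemma (in a version for sequences that are subadditive only from some index on) `a_n / n` and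
`b_n / n` converge to their infimum `s_min` and supremum `s_max`; by scaling, these also bound every
slope `s / n` of `S`. Counting the slice inside `[a_n, b_n]` gives `b_n - a_n ≥ d n - g`.
Conversely, since `S` generates `ℤ²`, some slice `S_{n'}` contains two consecutive integers
`v, v + 1`. Sums of `k` elements `a_m` or `b_m` and `L = b_m - a_m` elements `v` or `v + 1` fill an
interval of `k L + L + 1` integers in the slice of `k m + L n'`, whose cardinality is
`d (k m + L n') - g + 1`; letting `k → ∞` gives `b_m - a_m ≤ d m`.
Hence `(b_n - a_n) / n → d`.
-/

open Topology Set

def SubadditiveFrom (N : ℕ) (u : ℕ → ℝ) : Prop :=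
  ∀ m ≥ N, ∀ n ≥ N, u (m + n) ≤ u m + u n

namespace SubadditiveFrom

variable {N : ℕ} {u : ℕ → ℝ} (h : SubadditiveFrom N u)
include h

theorem apply_mul_add_le {m r : ℕ} (hm : N ≤ m) (hr : N ≤ r) (k : ℕ) :
    u (k * m + r) ≤ k * u m + u r := by
  induction k with
  | zero => simp
  | succ k ih =>
    calc u ((k + 1) * m + r) = u (m + (k * m + r)) := by ring_nf
      _ ≤ u m + u (k * m + r) := h _ hm _ (by nlinarith)
      _ ≤ (k + 1 : ℕ) * u m + u r := by push_cast; linarith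

theorem eventually_div_lt_of_div_lt {m : ℕ} (hm : N ≤ m) (hm0 : m ≠ 0) {L : ℝ}
    (hL : u m / m < L) : ∀ᶠ p in atTop, u p / p < L := by
  -- along each progression `m * k + r` with `r ≥ N`, the ratio tends to `u m / m`
  have hprog : ∀ r ≥ N, ∀ᶠ k : ℕ in atTop, u (m * k + r) / (m * k + r : ℕ) < L := by
    intro r hr
    have hlim₀ : Tendsto (fun x : ℝ => (u m + u r / x) / (m + r / x)) atTop
        (𝓝 ((u m + 0) / (m + 0))) :=
      (tendsto_const_nhds.add <| tendsto_const_nhds.div_atTop tendsto_id).div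
        (tendsto_const_nhds.add <| tendsto_const_nhds.div_atTop tendsto_id) (by simpa)
    have hlim : Tendsto (fun x : ℝ => (x * u m + u r) / (x * m + r)) atTop (𝓝 (u m / m)) := by
      rw [add_zero, add_zero] at hlim₀
      refine hlim₀.congr' <| (eventually_ne_atTop 0).mono fun x hx => ?_
      simp only [add_div' _ _ _ hx, div_div_div_cancel_right₀ hx, mul_comm]
    filter_upwards [(hlim.comp tendsto_natCast_atTop_atTop).eventually (gt_mem_nhds hL)] with k hk
    refine lt_of_le_of_lt ?_ hk
    rw [mul_comm m k, Function.comp_apply, Nat.cast_add, Nat.cast_mul]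
    gcongr
    exact h.apply_mul_add_le hm hr k
  -- shifting every residue class by `N * m` puts its offset in the range `≥ N`
  have hshift : ∀ᶠ p in atTop, u (p + N * m) / (p + N * m : ℕ) < L := by
    refine .atTop_of_arithmetic hm0 fun i _ => ?_
    simpa only [add_assoc] using hprog (i + N * m) (by nlinarith [Nat.pos_of_ne_zero hm0])
  obtain ⟨P, hP⟩ := eventually_atTop.1 hshift
  refine eventually_atTop.2 ⟨P + N * m, fun p hp => ?_⟩
  simpa [Nat.sub_add_cancel (le_of_add_le_right hp)] using hP (p - N * m) (by omega)

theorem exists_tendsto_div (hN : N ≠ 0) {c : ℝ} (hc : ∀ n ≥ N, c ≤ u n / n) :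
    ∃ l, Tendsto (fun n => u n / n) atTop (𝓝 l) ∧ ∀ n ≥ N, l ≤ u n / n := by
  have hbdd : BddBelow ((fun n => u n / n) '' Ici N) :=
    ⟨c, by rintro _ ⟨n, hn, rfl⟩; exact hc n hn⟩
  have hle : ∀ n ≥ N, sInf ((fun n => u n / n) '' Ici N) ≤ u n / n :=
    fun n hn => csInf_le hbdd ⟨n, hn, rfl⟩
  refine ⟨_, tendsto_order.2 ⟨fun a ha => ?_, fun L hL => ?_⟩, hle⟩
  · exact eventually_atTop.2 ⟨N, fun n hn => ha.trans_le (hle n hn)⟩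
  · obtain ⟨_, ⟨m, hm, rfl⟩, hmL⟩ := exists_lt_of_csInf_lt (by simp) hL
    exact h.eventually_div_lt_of_div_lt hm ((Nat.pos_of_ne_zero hN).trans_le hm).ne' hmL

end SubadditiveFrom

theorem AddSubmonoid.exists_eq_sub_of_mem_addSubgroupClosure {G : Type*} [AddCommGroup G]
    (M : AddSubmonoid G) {x : G} (hx : x ∈ AddSubgroup.closure (M : Set G)) :
    ∃ a ∈ M, ∃ b ∈ M, x = a - b := by
  induction hx using AddSubgroup.closure_induction with
  | mem x hx => exact ⟨x, hx, 0, M.zero_mem, (sub_zero x).symm⟩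
  | zero => exact ⟨0, M.zero_mem, 0, M.zero_mem, (sub_zero 0).symm⟩
  | add x y _ _ hx hy =>
    obtain ⟨a, ha, b, hb, rfl⟩ := hx
    obtain ⟨c, hc, e, he, rfl⟩ := hy
    exact ⟨a + c, M.add_mem ha hc, b + e, M.add_mem hb he, by abel⟩
  | neg x _ hx =>
    obtain ⟨a, ha, b, hb, rfl⟩ := hx
    exact ⟨b, hb, a, ha, neg_sub a b⟩

section AddClosed

variable {M : Type*} [AddMonoid M] {S : Set M} (hadd : ∀ a ∈ S, ∀ b ∈ S, a + b ∈ S)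
include hadd

theorem eq_zero_or_mem_of_mem_addSubmonoidClosure {x : M} (hx : x ∈ AddSubmonoid.closure S) :
    x = 0 ∨ x ∈ S := by
  induction hx using AddSubmonoid.closure_induction with
  | mem x hx => exact .inr hx
  | zero => exact .inl rfl
  | add x y _ _ hx hy =>
    rcases hx with rfl | hx
    · simpa using hy
    rcases hy with rfl | hy
    · exact .inr (by simpa using hx)
    exact .inr (hadd x hx y hy)

theorem add_mem_of_mem_addSubmonoidClosure {x c : M} (hx : x ∈ AddSubmonoid.closure S)
    (hc : c ∈ S) : x + c ∈ S := by
  rcases eq_zero_or_mem_of_mem_addSubmonoidClosure hadd hx with rfl | hx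
  · simpa using hc
  · exact hadd x hx c hc

end AddClosed

theorem exists_eq_mul_add_of_mem_Icc {k l : ℕ} {L z : ℤ} (hL : 0 ≤ L) (hLl : L ≤ l)
    (hz : z ∈ Icc 0 (k * L + l)) : ∃ j ≤ k, ∃ i ≤ l, z = j * L + i := by
  induction k generalizing z with
  | zero =>
    obtain ⟨hz0, hz⟩ := hz
    rw [Nat.cast_zero, zero_mul, zero_add] at hz
    exact ⟨0, le_rfl, z.toNat, by omega, by omega⟩
  | succ k ih =>
    obtain ⟨hz0, hz⟩ := hz
    push_cast at hz
    by_cases hzk : z ≤ k * L + l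
    · obtain ⟨j, hj, i, hi, rfl⟩ := ih ⟨hz0, hzk⟩
      exact ⟨j, hj.trans k.le_succ, i, hi, rfl⟩
    · obtain ⟨j, hj, i, hi, hzj⟩ := ih (z := z - L) ⟨by nlinarith, by linarith⟩
      exact ⟨j + 1, by omega, i, hi, by push_cast; linarith⟩

theorem Int.ncard_Icc_of_le {a b : ℤ} (h : a ≤ b + 1) :
    ((Icc a b).ncard : ℤ) = b + 1 - a := by
  rw [← Finset.coe_Icc, ncard_coe_finset, Int.card_Icc_of_le _ _ h]

theorem Int.ncard_le_of_subset_Icc {A : Set ℤ} {u w : ℤ} (huw : u ≤ w) (hA : A ⊆ Icc u w) :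
    (A.ncard : ℤ) ≤ w + 1 - u := by
  rw [← Int.ncard_Icc_of_le (by omega)]
  exact_mod_cast ncard_le_ncard hA (finite_Icc u w)

section Semigroup

variable {S : Set (ℕ × ℤ)} (hadd : ∀ a ∈ S, ∀ b ∈ S, a + b ∈ S)
include hadd

theorem mem_of_mem_addSubmonoidClosure_of_fst_ne_zero {p : ℕ × ℤ}
    (hp : p ∈ AddSubmonoid.closure S) (hp1 : p.1 ≠ 0) : p ∈ S :=
  (eq_zero_or_mem_of_mem_addSubmonoidClosure hadd hp).resolve_left (by rintro rfl; exact hp1 rfl)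

theorem add_mem_sgSlice {m n : ℕ} {s t : ℤ} (hs : s ∈ sgSlice S m) (ht : t ∈ sgSlice S n) :
    s + t ∈ sgSlice S (m + n) :=
  hadd _ hs _ ht

theorem add_mem_sgSliceR {m n : ℕ} {x y : ℝ} (hx : x ∈ sgSliceR S m)
    (hy : y ∈ sgSliceR S n) : x + y ∈ sgSliceR S (m + n) := by
  obtain ⟨s, hs, rfl⟩ := hx
  obtain ⟨t, ht, rfl⟩ := hy
  exact ⟨s + t, add_mem_sgSlice hadd hs ht, by push_cast; rfl⟩

theorem mul_mem_sgSlice {k n : ℕ} {s : ℤ} (hk : k ≠ 0) (hn : n ≠ 0)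
    (hs : s ∈ sgSlice S n) : k * s ∈ sgSlice S (k * n) := by
  have h := AddSubmonoid.nsmul_mem _ (AddSubmonoid.subset_closure (s := S) hs) k
  exact mem_of_mem_addSubmonoidClosure_of_fst_ne_zero hadd (by simpa using h) (by simp [hk, hn])

theorem exists_add_one_mem_sgSlice
    (hgen : AddSubgroup.closure ((fun p : ℕ × ℤ => ((p.1 : ℤ), p.2)) '' S) = ⊤) :
    ∃ n v, v ∈ sgSlice S n ∧ v + 1 ∈ sgSlice S n := by
  let φ : ℕ × ℤ →+ ℤ × ℤ := (Nat.castAddMonoidHom ℤ).prodMap (AddMonoidHom.id ℤ)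
  obtain ⟨c, hc⟩ : S.Nonempty := by
    by_contra hS
    simp [not_nonempty_iff_eq_empty.1 hS] at hgen
  have hle : AddSubgroup.closure (φ '' S) ≤
      AddSubgroup.closure ((AddSubmonoid.closure S).map φ : Set (ℤ × ℤ)) :=
    AddSubgroup.closure_mono (image_mono AddSubmonoid.subset_closure)
  have h01 : ((0, 1) : ℤ × ℤ) ∈
      AddSubgroup.closure ((AddSubmonoid.closure S).map φ : Set (ℤ × ℤ)) :=
    hle (hgen ▸ AddSubgroup.mem_top _)
  obtain ⟨_, ⟨p, hp, rfl⟩, _, ⟨q, hq, rfl⟩, hpq⟩ :=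
    AddSubmonoid.exists_eq_sub_of_mem_addSubgroupClosure _ h01
  -- `p, q ∈ S ∪ {0}`, and translating both by `c ∈ S` puts them into `S`
  have hpc := add_mem_of_mem_addSubmonoidClosure hadd hp hc
  have hqc := add_mem_of_mem_addSubmonoidClosure hadd hq hc
  have h1 : (p + c).1 = (q + c).1 := by
    have := congrArg Prod.fst hpq
    simp only [φ, AddMonoidHom.coe_prodMap, Nat.coe_castAddMonoidHom, Prod.fst_sub, Prod.map_fst]
      at this
    simp only [Prod.fst_add]
    omega
  have h2 : (p + c).2 = (q + c).2 + 1 := by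
    have := congrArg Prod.snd hpq
    simp only [φ, AddMonoidHom.coe_prodMap, AddMonoidHom.coe_id, Prod.snd_sub, Prod.map_snd, id_eq]
      at this
    simp only [Prod.snd_add]
    omega
  refine ⟨(q + c).1, (q + c).2, hqc, ?_⟩
  rw [← h2, ← h1]
  exact hpc

theorem Icc_subset_sgSlice {m n k l : ℕ} {u v L : ℤ} (hL : 0 ≤ L) (hLl : L ≤ l)
    (hkl : k * m + l * n ≠ 0) (hu : u ∈ sgSlice S m) (huL : u + L ∈ sgSlice S m)
    (hv : v ∈ sgSlice S n) (hv1 : v + 1 ∈ sgSlice S n) :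
    Icc (k * u + l * v) (k * u + l * v + (k * L + l)) ⊆ sgSlice S (k * m + l * n) := by
  intro y ⟨hy0, hy1⟩
  obtain ⟨j, hj, i, hi, hz⟩ :=
    exists_eq_mul_add_of_mem_Icc (k := k) hL hLl (z := y - (k * u + l * v)) ⟨by omega, by omega⟩
  obtain ⟨j', rfl⟩ := Nat.exists_eq_add_of_le hj
  obtain ⟨i', rfl⟩ := Nat.exists_eq_add_of_le hi
  have hmem : j • (m, u + L) + j' • (m, u) + i • (n, v + 1) + i' • (n, v) ∈
      AddSubmonoid.closure S := by
    refine add_mem (add_mem (add_mem ?_ ?_) ?_) ?_ <;>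
      exact AddSubmonoid.nsmul_mem _ (AddSubmonoid.subset_closure ‹_›) _
  have hpt : j • ((m, u + L) : ℕ × ℤ) + j' • (m, u) + i • (n, v + 1) + i' • (n, v) =
      ((j + j') * m + (i + i') * n, y) := by
    ext
    · simp only [Prod.fst_add, Prod.smul_fst, smul_eq_mul]; ring
    · simp only [Prod.snd_add, Prod.smul_snd]
      simp only [nsmul_eq_mul]
      push_cast at hz
      linarith
  rw [hpt] at hmem
  exact mem_of_mem_addSubmonoidClosure_of_fst_ne_zero hadd hmem hkl

theorem sub_le_mul_of_mem_sgSlice {d g : ℤ} {n₀ : ℕ}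
    (hcard : ∀ n : ℕ, n₀ ≤ n →
      (sgSlice S n).Finite ∧ ((sgSlice S n).ncard : ℤ) = d * n - g + 1)
    {m n : ℕ} {u w v : ℤ} (hm : m ≠ 0) (huw : u ≤ w) (hu : u ∈ sgSlice S m)
    (hw : w ∈ sgSlice S m) (hv : v ∈ sgSlice S n) (hv1 : v + 1 ∈ sgSlice S n) :
    w - u ≤ d * m := by
  set l := (w - u).toNat
  have hl : (l : ℤ) = w - u := Int.toNat_of_nonneg (by omega)
  have hinterval : ∀ k : ℕ, n₀ < k → k * (w - u) + l ≤ d * (k * m + l * n) - g := by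
    intro k hk
    have hkm : k ≤ k * m := Nat.le_mul_of_pos_right k (Nat.pos_of_ne_zero hm)
    have hsub := Icc_subset_sgSlice hadd (k := k) (l := l) (by omega) hl.ge (by omega) hu
      (by rwa [add_sub_cancel]) hv hv1
    obtain ⟨hfin, hcardk⟩ := hcard (k * m + l * n) (by omega)
    have hle : ((Icc (k * u + l * v) (k * u + l * v + (k * (w - u) + l))).ncard : ℤ) ≤
        (sgSlice S (k * m + l * n)).ncard := by exact_mod_cast ncard_le_ncard hsub hfin
    rw [Int.ncard_Icc_of_le (by nlinarith), hcardk] at hle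
    push_cast at hle
    linarith
  -- `k * (w - u - d * m) ≤ d * l * n - g` for all large `k` forces `w - u ≤ d * m`
  by_contra! h
  have := hinterval (n₀ + (d * l * n - g).toNat + 1) (by omega)
  push_cast at this
  nlinarith [Int.self_le_toNat (d * l * n - g)]

end Semigroup

def slopeSet (S : Set (ℕ × ℤ)) : Set ℝ :=
  {x : ℝ | ∃ p ∈ S, 1 ≤ p.1 ∧ x = (p.2 : ℝ) / (p.1 : ℝ)}

theorem div_mem_slopeSet {S : Set (ℕ × ℤ)} {n : ℕ} (hn : n ≠ 0) {x : ℝ}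
    (hx : x ∈ sgSliceR S n) : x / n ∈ slopeSet S := by
  obtain ⟨s, hs, rfl⟩ := hx
  exact ⟨(n, s), hs, Nat.one_le_iff_ne_zero.2 hn, rfl⟩

section Extrema

variable {S : Set (ℕ × ℤ)} {N : ℕ}
  (hgood : ∀ n ≥ N, (sgSliceR S n).Finite ∧ (sgSliceR S n).Nonempty)

theorem sgSliceR_finite_nonempty {d g : ℤ} (hd : 1 ≤ d) {n₀ : ℕ}
    (hcard : ∀ n : ℕ, n₀ ≤ n →
      (sgSlice S n).Finite ∧ ((sgSlice S n).ncard : ℤ) = d * n - g + 1)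
    {n : ℕ} (hn₀ : n₀ ≤ n) (hg : g ≤ n) :
    (sgSliceR S n).Finite ∧ (sgSliceR S n).Nonempty := by
  obtain ⟨hfin, hc⟩ := hcard n hn₀
  refine ⟨hfin.image _, Nonempty.image _ ?_⟩
  rw [← ncard_pos hfin, ← Int.natCast_pos, hc]
  nlinarith

theorem abs_div_le_of_mem_sgSliceR {C : ℝ}
    (hC : ∀ p ∈ S, 1 ≤ p.1 → |(p.2 : ℝ)| ≤ C * p.1) {n : ℕ} (hn : n ≠ 0) {x : ℝ}
    (hx : x ∈ sgSliceR S n) : |x / n| ≤ C := by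
  obtain ⟨s, hs, rfl⟩ := hx
  rw [abs_div, Nat.abs_cast, div_le_iff₀ (by positivity)]
  exact hC (n, s) hs (Nat.one_le_iff_ne_zero.2 hn)

include hgood

theorem csInf_mem_sgSliceR {n : ℕ} (hn : N ≤ n) : sInf (sgSliceR S n) ∈ sgSliceR S n :=
  (hgood n hn).2.csInf_mem (hgood n hn).1

theorem csSup_mem_sgSliceR {n : ℕ} (hn : N ≤ n) : sSup (sgSliceR S n) ∈ sgSliceR S n :=
  (hgood n hn).2.csSup_mem (hgood n hn).1

variable (hadd : ∀ a ∈ S, ∀ b ∈ S, a + b ∈ S) (hN : N ≠ 0) {C : ℝ}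
  (hC : ∀ p ∈ S, 1 ≤ p.1 → |(p.2 : ℝ)| ≤ C * p.1)
include hadd hN hC

theorem exists_tendsto_sInf_sgSliceR_div :
    ∃ l : ℝ, Tendsto (fun n : ℕ => sInf (sgSliceR S n) / n) atTop (𝓝 l) ∧
      ∀ n ≥ N, l ≤ sInf (sgSliceR S n) / n := by
  refine SubadditiveFrom.exists_tendsto_div (fun m hm n hn => ?_) hN (c := -C) fun n hn => ?_
  · exact csInf_le (hgood _ (by omega)).1.bddBelow <|
      add_mem_sgSliceR hadd (csInf_mem_sgSliceR hgood hm) (csInf_mem_sgSliceR hgood hn)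
  · exact (abs_le.1 (abs_div_le_of_mem_sgSliceR hC (by omega) (csInf_mem_sgSliceR hgood hn))).1

theorem exists_tendsto_sSup_sgSliceR_div :
    ∃ l : ℝ, Tendsto (fun n : ℕ => sSup (sgSliceR S n) / n) atTop (𝓝 l) ∧
      ∀ n ≥ N, sSup (sgSliceR S n) / n ≤ l := by
  have hsub : SubadditiveFrom N fun n => -sSup (sgSliceR S n) := fun m hm n hn => by
    have := le_csSup (hgood _ (by omega)).1.bddAbove <|
      add_mem_sgSliceR hadd (csSup_mem_sgSliceR hgood hm) (csSup_mem_sgSliceR hgood hn)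
    linarith
  obtain ⟨l, hl, hle⟩ := hsub.exists_tendsto_div hN (c := -C) fun n hn => by
    have := abs_le.1 (abs_div_le_of_mem_sgSliceR hC (by omega) (csSup_mem_sgSliceR hgood hn))
    rw [neg_div]
    linarith
  refine ⟨-l, by simpa only [neg_div, neg_neg] using hl.neg, fun n hn => ?_⟩
  have := hle n hn
  rw [neg_div] at this
  linarith

omit hC in
theorem slopeSet_subset_Icc {a b : ℝ} (ha : ∀ n ≥ N, a ≤ sInf (sgSliceR S n) / n)
    (hb : ∀ n ≥ N, sSup (sgSliceR S n) / n ≤ b) : slopeSet S ⊆ Icc a b := by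
  rintro _ ⟨⟨n, s⟩, hp, hn, rfl⟩
  -- `s / n` is also the slope of `(N * n, N * s) ∈ S`, and `N * n ≥ N`
  have hNn : N ≤ N * n := Nat.le_mul_of_pos_right N hn
  have hmem : ((N * s : ℤ) : ℝ) ∈ sgSliceR S (N * n) :=
    ⟨_, mul_mem_sgSlice hadd hN (by omega) hp, rfl⟩
  have hslope : ((N * s : ℤ) : ℝ) / (N * n : ℕ) = s / n := by
    push_cast
    exact mul_div_mul_left _ _ (by exact_mod_cast hN)
  constructor
  · calc a ≤ sInf (sgSliceR S (N * n)) / (N * n : ℕ) := ha _ hNn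
      _ ≤ s / n := by
        rw [← hslope]
        gcongr
        exact csInf_le (hgood _ hNn).1.bddBelow hmem
  · calc (s : ℝ) / n ≤ sSup (sgSliceR S (N * n)) / (N * n : ℕ) := by
          rw [← hslope]
          gcongr
          exact le_csSup (hgood _ hNn).1.bddAbove hmem
      _ ≤ b := hb _ hNn

end Extrema

theorem tendsto_sSup_sub_sInf_sgSliceR_div {S : Set (ℕ × ℤ)}
    (hadd : ∀ a ∈ S, ∀ b ∈ S, a + b ∈ S)
    (hgen : AddSubgroup.closure ((fun p : ℕ × ℤ => ((p.1 : ℤ), p.2)) '' S) = ⊤)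
    {d g : ℤ} {n₀ N : ℕ}
    (hcard : ∀ n : ℕ, n₀ ≤ n →
      (sgSlice S n).Finite ∧ ((sgSlice S n).ncard : ℤ) = d * n - g + 1)
    (hgood : ∀ n ≥ N, (sgSliceR S n).Finite ∧ (sgSliceR S n).Nonempty) (hn₀N : n₀ ≤ N) :
    Tendsto (fun n : ℕ => sSup (sgSliceR S n) / n - sInf (sgSliceR S n) / n) atTop (𝓝 d) := by
  obtain ⟨n', v, hv, hv1⟩ := exists_add_one_mem_sgSlice hadd hgen
  have hwidth : ∀ n ≥ N + 1,
      (d : ℝ) * n - g ≤ sSup (sgSliceR S n) - sInf (sgSliceR S n) ∧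
        sSup (sgSliceR S n) - sInf (sgSliceR S n) ≤ (d : ℝ) * n := by
    intro n hn
    obtain ⟨u, hu, hu'⟩ := csInf_mem_sgSliceR hgood (n := n) (by omega)
    obtain ⟨w, hw, hw'⟩ := csSup_mem_sgSliceR hgood (n := n) (by omega)
    dsimp only at hu' hw'
    have hsub : sgSlice S n ⊆ Icc u w := fun s hs => by
      have hs' : (s : ℝ) ∈ sgSliceR S n := ⟨s, hs, rfl⟩
      constructor
      · exact_mod_cast hu' ▸ csInf_le (hgood n (by omega)).1.bddBelow hs'
      · exact_mod_cast hw' ▸ le_csSup (hgood n (by omega)).1.bddAbove hs'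
    have huw : u ≤ w := (hsub hu).2
    have hcount := Int.ncard_le_of_subset_Icc huw hsub
    rw [(hcard n (by omega)).2] at hcount
    rw [← hu', ← hw']
    exact ⟨by exact_mod_cast (by linarith : d * n - g ≤ w - u),
      by exact_mod_cast sub_le_mul_of_mem_sgSlice hadd hcard (by omega) huw hu hw hv hv1⟩
  have hlower : Tendsto (fun n : ℕ => (d : ℝ) - g / n) atTop (𝓝 d) := by
    simpa using tendsto_const_nhds.sub (tendsto_const_div_atTop_nhds_zero_nat (g : ℝ))
  refine tendsto_of_tendsto_of_tendsto_of_le_of_le' hlower tendsto_const_nhds ?_ ?_ <;>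
    filter_upwards [eventually_ge_atTop (N + 1)] with n hn <;>
    have hn0 : (0 : ℝ) < n := by exact_mod_cast (show 0 < n by omega)
  · rw [← sub_div, sub_div' hn0.ne', div_le_div_iff_of_pos_right hn0]
    exact (hwidth n hn).1
  · rw [← sub_div, div_le_iff₀ hn0]
    exact (hwidth n hn).2

theorem closure_convexHull_eq_Icc {Λ : Set ℝ} {a b : ℝ} (hsub : Λ ⊆ Icc a b)
    (ha : a ∈ closure Λ) (hb : b ∈ closure Λ) : closure (convexHull ℝ Λ) = Icc a b := by
  have hab : a ≤ b := (closure_minimal hsub isClosed_Icc ha).2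
  have hcl : closure Λ ⊆ closure (convexHull ℝ Λ) := closure_mono (subset_convexHull ℝ Λ)
  refine (closure_minimal (convexHull_min hsub (convex_Icc a b)) isClosed_Icc).antisymm ?_
  rw [← segment_eq_Icc hab]
  exact (convex_convexHull ℝ Λ).closure.segment_subset (hcl ha) (hcl hb)

/-- Let `S ⊆ ℕ × ℤ` be an additive subsemigroup which generates
`ℤ × ℤ` as a group, has linearly bounded slices, and whose `n`-th sgSlice has
cardinality `d·n - g + 1` for all large `n`. Then `(min S_n)/n` and
`(max S_n)/n` converge to real numbers `s_min` and `s_max` with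
`s_max - s_min = d`, and the closure of the convex hull of
`{ s/n : (n,s) ∈ S, n ≥ 1 }` is the compact interval `[s_min, s_max]`
(of length `d`). -/
theorem statement_13 (d g : ℤ) (hd : 1 ≤ d) (S : Set (ℕ × ℤ))
    (hadd : ∀ a ∈ S, ∀ b ∈ S, a + b ∈ S)
    (hgen : AddSubgroup.closure ((fun p : ℕ × ℤ => ((p.1 : ℤ), p.2)) '' S) = ⊤)
    (hbdd : ∃ C : ℝ, ∀ p ∈ S, 1 ≤ p.1 → |(p.2 : ℝ)| ≤ C * p.1)
    (hslice : ∃ n₀ : ℕ, 1 ≤ n₀ ∧ ∀ n : ℕ, n₀ ≤ n →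
      (sgSlice S n).Finite ∧ ((sgSlice S n).ncard : ℤ) = d * n - g + 1) :
    ∃ smin smax : ℝ,
      Tendsto (fun n : ℕ => sInf (sgSliceR S n) / n) atTop (nhds smin) ∧
      Tendsto (fun n : ℕ => sSup (sgSliceR S n) / n) atTop (nhds smax) ∧
      smax - smin = (d : ℝ) ∧
      closure (convexHull ℝ
          {x : ℝ | ∃ p ∈ S, 1 ≤ p.1 ∧ x = (p.2 : ℝ) / (p.1 : ℝ)})
        = Set.Icc smin smax := by
  obtain ⟨C, hC⟩ := hbdd
  obtain ⟨n₀, hn₀, hcard⟩ := hslice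
  set N := n₀ + g.toNat
  have hN : N ≠ 0 := by omega
  have hgood : ∀ n ≥ N, (sgSliceR S n).Finite ∧ (sgSliceR S n).Nonempty := fun n hn =>
    sgSliceR_finite_nonempty hd hcard (by omega) (by omega)
  obtain ⟨smin, hmin, hmin_le⟩ := exists_tendsto_sInf_sgSliceR_div hgood hadd hN hC
  obtain ⟨smax, hmax, hmax_ge⟩ := exists_tendsto_sSup_sgSliceR_div hgood hadd hN hC
  refine ⟨smin, smax, hmin, hmax, tendsto_nhds_unique (hmax.sub hmin)
    (tendsto_sSup_sub_sInf_sgSliceR_div hadd hgen hcard hgood (by omega)), ?_⟩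
  have hmem : ∀ f : ℕ → ℝ, (∀ n ≥ N, f n ∈ sgSliceR S n) →
      ∀ᶠ n in atTop, f n / n ∈ slopeSet S :=
    fun f hf => eventually_atTop.2 ⟨N, fun n hn => div_mem_slopeSet (by omega) (hf n hn)⟩
  exact closure_convexHull_eq_Icc (slopeSet_subset_Icc hgood hadd hN hmin_le hmax_ge)
    (mem_closure_of_tendsto hmin (hmem _ fun n => csInf_mem_sgSliceR hgood))
    (mem_closure_of_tendsto hmax (hmem _ fun n => csSup_mem_sgSliceR hgood))
end

section
/- Let d ≥ 1 and g be integers, and let S be an additive subsemigroup of ℕ × ℤ such that: (i) the subgroup of ℤ × ℤ generated by S is all of ℤ × ℤ; (ii) there is a constant C with |s| ≤ Cn for every (n,s) ∈ S with n ≥ 1; (iii) there is n₀ ≥ 1 such that for every n ≥ n₀ the slice S_n := { s ∈ ℤ : (n,s) ∈ S } is finite of cardinality dn − g + 1. Write s_{n,0} = min S_n and s_{n,r_n} = max S_n, where r_n + 1 = |S_n|. Then lim_{n→∞} [ (s_{n,0} + s_{n,r_n})/(2nd) − (1/(n d (r_n+1))) Σ_{s ∈ S_n} s ] = 0; that is,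 the average of the normalized slopes in S_n converges to the midpoint of the limiting interval divided by d. -/
/-!
Slices of the additive monoid generated by `S` add up: `S_p + S_n ⊆ S_{p+n}`, and they agree with
those of `S` in positive degree. Since `S` generates `ℤ × ℤ`, some slice `S_m` contains two
consecutive integers `t, t + 1`, so sums of `D` of them fill an interval of `D + 1` integers in
`S_{Dm}`. If `a < b` lay in `S_n` with `D = b - a > dn`, adding `k` elements `a` or `b` to that
interval would give `(k + 1) D + 1` consecutive integers in `S_{Dm + kn}`, more than its
cardinality `d (Dm + kn) - g + 1` for large `k`. Hence `max S_n - min S_n ≤ dn`, and the interval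
`[min S_n, max S_n]` has at most `g` gaps outside `S_n`. Reflecting the interval about its
midpoint, `|S_n| (min + max) - 2 ∑ S_n` is minus the same sum over the gaps, at most `g · dn` in
absolute value; dividing by `2nd |S_n|` bounds the defect by `g / (2 |S_n|) → 0`.
-/

open Filter

open Finset in
theorem Finset.sum_Icc_two_mul_sub_eq_zero (a b : ℤ) :
    ∑ s ∈ Icc a b, (2 * s - (a + b)) = 0 := by
  have hreflect : ∑ s ∈ Icc a b, (2 * s - (a + b)) = ∑ s ∈ Icc a b, -(2 * s - (a + b)) :=
    sum_nbij' (fun s => a + b - s) (fun s => a + b - s)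
      (by intro s hs; simp only [mem_Icc] at hs ⊢; omega)
      (by intro s hs; simp only [mem_Icc] at hs ⊢; omega)
      (by intro s _; ring) (by intro s _; ring) (by intro s _; ring)
  rw [sum_neg_distrib] at hreflect
  omega

open Finset in
theorem Finset.abs_card_mul_min'_add_max'_sub_two_mul_sum_le (F : Finset ℤ) (hF : F.Nonempty) :
    |#F * (F.min' hF + F.max' hF) - 2 * ∑ s ∈ F, s|
      ≤ (F.max' hF - F.min' hF + 1 - #F) * (F.max' hF - F.min' hF) := by
  set a := F.min' hF
  set b := F.max' hF
  have hab : a ≤ b := F.min'_le_max' hF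
  have hFI : F ⊆ Icc a b := fun x hx => mem_Icc.mpr ⟨F.min'_le x hx, F.le_max' x hx⟩
  have hgaps : (#(Icc a b \ F) : ℤ) = b - a + 1 - #F := by
    rw [card_sdiff_of_subset hFI, Nat.cast_sub (card_le_card hFI),
      Int.card_Icc_of_le _ _ (by omega)]
    ring
  have hsplit : ∑ s ∈ Icc a b \ F, (2 * s - (a + b)) + ∑ s ∈ F, (2 * s - (a + b)) = 0 := by
    rw [sum_sdiff hFI, sum_Icc_two_mul_sub_eq_zero]
  have hgap_bound : ∀ s ∈ Icc a b \ F, |2 * s - (a + b)| ≤ b - a := by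
    intro s hs
    have := mem_Icc.mp (mem_sdiff.mp hs).1
    rw [abs_le]; omega
  have hsum : ∑ s ∈ F, (2 * s - (a + b)) = 2 * ∑ s ∈ F, s - #F * (a + b) := by
    rw [sum_sub_distrib, sum_const, nsmul_eq_mul, ← mul_sum]
  calc |#F * (a + b) - 2 * ∑ s ∈ F, s|
      = |∑ s ∈ Icc a b \ F, (2 * s - (a + b))| := by
        congr 1; linarith
    _ ≤ ∑ s ∈ Icc a b \ F, |2 * s - (a + b)| := abs_sum_le_sum_abs _ _
    _ ≤ #(Icc a b \ F) * (b - a) := by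
        rw [← nsmul_eq_mul, ← sum_const]; exact sum_le_sum hgap_bound
    _ = (b - a + 1 - #F) * (b - a) := by rw [hgaps]

theorem Set.Finite.le_ncard_of_Icc_subset {s : Set ℤ} (hs : s.Finite) {x y : ℤ}
    (h : Set.Icc x y ⊆ s) : y + 1 - x ≤ s.ncard := by
  have := Set.ncard_le_ncard h hs
  rw [← Finset.coe_Icc, Set.ncard_coe_finset, Int.card_Icc] at this
  omega

theorem AddMonoidHom.exists_sub_eq_of_mem_closure_image {A G : Type*} [AddMonoid A]
    [AddCommGroup G] (f : A →+ G) {s : Set A} {x : G}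
    (hx : x ∈ AddSubgroup.closure (f '' s)) :
    ∃ p ∈ AddSubmonoid.closure s, ∃ q ∈ AddSubmonoid.closure s, f p - f q = x := by
  induction hx using AddSubgroup.closure_induction with
  | mem _ hy =>
    obtain ⟨p, hp, rfl⟩ := hy
    exact ⟨p, AddSubmonoid.subset_closure hp, 0, zero_mem _, by simp⟩
  | zero => exact ⟨0, zero_mem _, 0, zero_mem _, by simp⟩
  | add _ _ _ _ hy hz =>
    obtain ⟨p, hp, q, hq, rfl⟩ := hy
    obtain ⟨p', hp', q', hq', rfl⟩ := hz
    exact ⟨p + p', add_mem hp hp', q + q', add_mem hq hq', by simp only [map_add]; abel⟩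
  | neg _ _ hy =>
    obtain ⟨p, hp, q, hq, rfl⟩ := hy
    exact ⟨q, hq, p, hp, by abel⟩

section Slices

variable {M : AddSubmonoid (ℕ × ℤ)}

theorem add_mem_sgSlice_s15 {p n : ℕ} {x a : ℤ} (hx : x ∈ sgSlice M p) (ha : a ∈ sgSlice M n) :
    x + a ∈ sgSlice M (p + n) :=
  M.add_mem hx ha

theorem Icc_add_subset_sgSlice {p n : ℕ} {c a L D : ℤ} (hDL : D ≤ L + 1)
    (hI : Set.Icc c (c + L) ⊆ sgSlice M p) (ha : a ∈ sgSlice M n)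
    (haD : a + D ∈ sgSlice M n) :
    Set.Icc (c + a) (c + a + (L + D)) ⊆ sgSlice M (p + n) := by
  rintro x ⟨hx₁, hx₂⟩
  by_cases h : x - a ≤ c + L
  · have hx : x - a ∈ Set.Icc c (c + L) := ⟨by linarith, h⟩
    simpa using add_mem_sgSlice_s15 (hI hx) ha
  · have hx : x - (a + D) ∈ Set.Icc c (c + L) := ⟨by linarith, by linarith⟩
    simpa using add_mem_sgSlice_s15 (hI hx) haD

theorem Icc_add_nsmul_subset_sgSlice {p n : ℕ} {c a L D : ℤ} (hD : 0 ≤ D) (hDL : D ≤ L + 1)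
    (hI : Set.Icc c (c + L) ⊆ sgSlice M p) (ha : a ∈ sgSlice M n)
    (haD : a + D ∈ sgSlice M n) (k : ℕ) :
    Set.Icc (c + k * a) (c + k * a + (L + k * D)) ⊆ sgSlice M (p + k * n) := by
  induction k with
  | zero => simpa using hI
  | succ k ih =>
    have hk := Icc_add_subset_sgSlice (by nlinarith) ih ha haD
    convert hk using 2 <;> push_cast <;> ring

theorem Icc_subset_sgSlice_of_consecutive {m : ℕ} {t : ℤ} (ht : t ∈ sgSlice M m)
    (ht₁ : t + 1 ∈ sgSlice M m) (k : ℕ) :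
    Set.Icc (k * t) (k * t + k) ⊆ sgSlice M (k * m) := by
  have hzero : Set.Icc (0 : ℤ) (0 + 0) ⊆ sgSlice M 0 := by
    intro x hx
    obtain rfl : x = 0 := by simpa using hx
    exact M.zero_mem
  simpa using Icc_add_nsmul_subset_sgSlice zero_le_one le_rfl hzero ht ht₁ k

theorem sub_le_of_ncard_sgSlice_eq {n₀ m : ℕ} {t d g : ℤ} (hd : 0 ≤ d)
    (hcard : ∀ n : ℕ, n₀ ≤ n →
      (sgSlice M n).Finite ∧ ((sgSlice M n).ncard : ℤ) = d * n - g + 1)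
    (ht : t ∈ sgSlice M m) (ht₁ : t + 1 ∈ sgSlice M m) {n : ℕ} (hn : n₀ ≤ n) {a b : ℤ}
    (ha : a ∈ sgSlice M n) (hb : b ∈ sgSlice M n) :
    b - a ≤ d * n := by
  by_contra! hlt
  set D := (b - a).toNat
  have hD : (D : ℤ) = b - a := Int.toNat_of_nonneg (by nlinarith [Int.natCast_nonneg n])
  have hcover (k : ℕ) :
      Set.Icc (D * t + k * a) (D * t + k * a + (D + k * (b - a))) ⊆ sgSlice M (D * m + k * n) :=
    Icc_add_nsmul_subset_sgSlice (by omega) (by omega)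
      (by simpa [hD] using Icc_subset_sgSlice_of_consecutive ht ht₁ D)
      ha (by simpa using hb) k
  set k := (d * D * m - g - D).toNat + 1
  have hk : n₀ ≤ D * m + k * n := le_add_left (hn.trans (Nat.le_mul_of_pos_left n (by omega)))
  obtain ⟨hfin, hncard⟩ := hcard _ hk
  have hle := hfin.le_ncard_of_Icc_subset (hcover k)
  push_cast at hle hncard
  have hk' : d * D * m - g - D < k := by
    simp only [k]; push_cast; linarith [Int.self_le_toNat (d * D * m - g - D)]
  nlinarith [mul_le_mul_of_nonneg_left hlt.le (Int.natCast_nonneg k)]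

end Slices

theorem mem_of_mem_addSubmonoidClosure {S : Set (ℕ × ℤ)}
    (hadd : ∀ a ∈ S, ∀ b ∈ S, a + b ∈ S) {p : ℕ × ℤ} (hp : p ∈ AddSubmonoid.closure S)
    (hp₁ : p.1 ≠ 0) : p ∈ S := by
  suffices p = 0 ∨ p ∈ S by simpa [hp₁, Prod.ext_iff] using this
  clear hp₁
  induction hp using AddSubmonoid.closure_induction with
  | mem _ h => exact Or.inr h
  | zero => exact Or.inl rfl
  | add _ _ _ _ hx hy =>
    rcases hx with rfl | hx
    · simpa using hy
    rcases hy with rfl | hy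
    · simpa using Or.inr hx
    exact Or.inr (hadd _ hx _ hy)

theorem sgSlice_addSubmonoidClosure {S : Set (ℕ × ℤ)} (hadd : ∀ a ∈ S, ∀ b ∈ S, a + b ∈ S)
    {n : ℕ} (hn : n ≠ 0) : sgSlice (AddSubmonoid.closure S) n = sgSlice S n :=
  Set.ext fun _ => ⟨fun h => mem_of_mem_addSubmonoidClosure hadd h hn,
    fun h => AddSubmonoid.subset_closure h⟩

theorem exists_consecutive_mem_sgSlice {S : Set (ℕ × ℤ)}
    (hgen : AddSubgroup.closure ((fun p : ℕ × ℤ => ((p.1 : ℤ), p.2)) '' S) = ⊤) :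
    ∃ (m : ℕ) (t : ℤ), t ∈ sgSlice (AddSubmonoid.closure S) m ∧
      t + 1 ∈ sgSlice (AddSubmonoid.closure S) m := by
  have h01 : ((0, 1) : ℤ × ℤ) ∈ AddSubgroup.closure
      ((Nat.castAddMonoidHom ℤ).prodMap (AddMonoidHom.id ℤ) '' S) := hgen ▸ trivial
  obtain ⟨⟨i, u⟩, hp, ⟨m, t⟩, hq, hpq⟩ := AddMonoidHom.exists_sub_eq_of_mem_closure_image _ h01
  change ((i : ℤ) - m, u - t) = (0, 1) at hpq
  simp only [Prod.mk.injEq] at hpq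
  obtain rfl : i = m := by omega
  obtain rfl : u = t + 1 := by omega
  exact ⟨_, _, hq, hp⟩

noncomputable def sliceMidpointDefect (S : Set (ℕ × ℤ)) (d : ℤ) (n : ℕ) : ℝ :=
  (sInf (sgSliceR S n) + sSup (sgSliceR S n)) / (2 * n * d)
    - (1 / ((n : ℝ) * d * ((sgSlice S n).ncard : ℝ))) * ∑ᶠ s ∈ sgSlice S n, (s : ℝ)

open Finset in
theorem sliceMidpointDefect_eq {S : Set (ℕ × ℤ)} {d : ℤ} {n : ℕ} (hd : d ≠ 0) (hn : n ≠ 0)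
    {F : Finset ℤ} (hF : sgSlice S n = F) (hne : F.Nonempty) :
    sliceMidpointDefect S d n
      = ((#F * (F.min' hne + F.max' hne) - 2 * ∑ s ∈ F, s : ℤ) : ℝ) / (2 * n * d * #F) := by
  have hR : sgSliceR S n = (F.image (fun s : ℤ => (s : ℝ)) : Set ℝ) := by
    rw [sgSliceR, hF, coe_image]
  have hneR := hne.image (fun s : ℤ => (s : ℝ))
  have hcard : (#F : ℝ) ≠ 0 := Nat.cast_ne_zero.mpr hne.card_ne_zero
  rw [sliceMidpointDefect, hR, hneR.csInf_eq_min', hneR.csSup_eq_max', min'_image Int.cast_mono,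
    max'_image Int.cast_mono, hF, Set.ncard_coe_finset, finsum_mem_coe_finset]
  field_simp
  push_cast
  ring

open Finset in
theorem abs_sliceMidpointDefect_le {S : Set (ℕ × ℤ)} {d g : ℤ} {n : ℕ} (hd : 0 < d)
    (hn : n ≠ 0) (hfin : (sgSlice S n).Finite) (hne : (sgSlice S n).Nonempty)
    (hcard : ((sgSlice S n).ncard : ℤ) = d * n - g + 1)
    (hspan : ∀ a ∈ sgSlice S n, ∀ b ∈ sgSlice S n, b - a ≤ d * n) :
    |sliceMidpointDefect S d n| ≤ g / (2 * (sgSlice S n).ncard) := by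
  obtain ⟨F, hF⟩ : ∃ F : Finset ℤ, sgSlice S n = F := ⟨hfin.toFinset, hfin.coe_toFinset.symm⟩
  have hFne : F.Nonempty := by rw [hF] at hne; exact_mod_cast hne
  rw [hF, Set.ncard_coe_finset] at hcard ⊢
  rw [hF] at hspan
  have hFI : F ⊆ Icc (F.min' hFne) (F.max' hFne) := fun x hx =>
    mem_Icc.mpr ⟨F.min'_le x hx, F.le_max' x hx⟩
  have hdiam : F.max' hFne - F.min' hFne ≤ d * n :=
    hspan _ (F.min'_mem hFne) _ (F.max'_mem hFne)
  have hg : 0 ≤ g := by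
    have := card_le_card hFI
    rw [Int.card_Icc] at this
    have := F.min'_le_max' hFne
    omega
  have hnum : |#F * (F.min' hFne + F.max' hFne) - 2 * ∑ s ∈ F, s| ≤ g * (d * n) :=
    (abs_card_mul_min'_add_max'_sub_two_mul_sum_le F hFne).trans
      (mul_le_mul (by omega) hdiam (by linarith [F.min'_le_max' hFne]) hg)
  have hnR : (0 : ℝ) < n := by exact_mod_cast Nat.pos_of_ne_zero hn
  have hdR : (0 : ℝ) < d := by exact_mod_cast hd
  have hFR : (0 : ℝ) < #F := by exact_mod_cast hFne.card_pos
  have hden : (0 : ℝ) < 2 * n * d * #F := by positivity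
  rw [sliceMidpointDefect_eq hd.ne' hn hF hFne, abs_div, abs_of_pos hden]
  calc _ ≤ ((g * (d * n) : ℤ) : ℝ) / (2 * n * d * #F) := by
        gcongr ?_ / _
        rw [← Int.cast_abs]
        exact_mod_cast hnum
    _ = g / (2 * #F) := by
        push_cast
        field_simp

theorem statement_15_general (d g : ℤ) (hd : 1 ≤ d) (S : Set (ℕ × ℤ))
    (hadd : ∀ a ∈ S, ∀ b ∈ S, a + b ∈ S)
    (hgen : AddSubgroup.closure ((fun p : ℕ × ℤ => ((p.1 : ℤ), p.2)) '' S) = ⊤)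
    (hslice : ∃ n₀ : ℕ, 1 ≤ n₀ ∧ ∀ n : ℕ, n₀ ≤ n →
      (sgSlice S n).Finite ∧ ((sgSlice S n).ncard : ℤ) = d * n - g + 1) :
    Tendsto (fun n : ℕ =>
        (sInf (sgSliceR S n) + sSup (sgSliceR S n)) / (2 * n * d)
          - (1 / ((n : ℝ) * d * ((sgSlice S n).ncard : ℝ)))
              * ∑ᶠ s ∈ sgSlice S n, (s : ℝ))
      atTop (nhds 0) := by
  obtain ⟨n₀, hn₀, hslice⟩ := hslice
  have hMS (n : ℕ) (hn : n₀ ≤ n) : sgSlice (AddSubmonoid.closure S) n = sgSlice S n :=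
    sgSlice_addSubmonoidClosure hadd (by omega)
  obtain ⟨m, t, ht, ht₁⟩ := exists_consecutive_mem_sgSlice hgen
  have hspan (n : ℕ) (hn : n₀ ≤ n) : ∀ a ∈ sgSlice S n, ∀ b ∈ sgSlice S n, b - a ≤ d * n := by
    rw [← hMS n hn]
    exact fun a ha b hb => sub_le_of_ncard_sgSlice_eq (by omega)
      (fun k hk => hMS k hk ▸ hslice k hk) ht ht₁ hn ha hb
  have hcard : Tendsto (fun n : ℕ => ((sgSlice S n).ncard : ℝ)) atTop atTop := by
    refine tendsto_atTop_mono' atTop ?_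
      (tendsto_atTop_add_const_right atTop (1 - g : ℝ) tendsto_natCast_atTop_atTop)
    filter_upwards [eventually_ge_atTop n₀] with n hn
    have : (n : ℤ) + (1 - g) ≤ (sgSlice S n).ncard := by
      rw [(hslice n hn).2]; nlinarith
    exact_mod_cast this
  show Tendsto (sliceMidpointDefect S d) atTop (nhds 0)
  refine squeeze_zero_norm' ?_
    ((tendsto_const_nhds (x := (g : ℝ))).div_atTop (hcard.const_mul_atTop two_pos))
  filter_upwards [eventually_ge_atTop n₀, hcard.eventually_gt_atTop 0] with n hn hpos
  exact (Real.norm_eq_abs _).trans_le <| abs_sliceMidpointDefect_le (by omega) (by omega)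
    (hslice n hn).1 (Set.nonempty_of_ncard_ne_zero (by exact_mod_cast hpos.ne'))
    (hslice n hn).2 (hspan n hn)

/-- Let `S ⊆ ℕ × ℤ` be an additive subsemigroup which generates
`ℤ × ℤ` as a group, has linearly bounded slices, and whose `n`-th slice has
cardinality `d·n - g + 1 (= r_n + 1)` for all large `n`. Writing
`s_{n,0} = min S_n` and `s_{n,r_n} = max S_n`, we have
`(s_{n,0} + s_{n,r_n})/(2nd) - (1/(n d (r_n+1))) Σ_{s ∈ S_n} s → 0`;
that is, the average of the normalized slopes in `S_n` converges to the midpoint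
of the limiting interval divided by `d`. -/
theorem statement_15 (d g : ℤ) (hd : 1 ≤ d) (S : Set (ℕ × ℤ))
    (hadd : ∀ a ∈ S, ∀ b ∈ S, a + b ∈ S)
    (hgen : AddSubgroup.closure ((fun p : ℕ × ℤ => ((p.1 : ℤ), p.2)) '' S) = ⊤)
    (hbdd : ∃ C : ℝ, ∀ p ∈ S, 1 ≤ p.1 → |(p.2 : ℝ)| ≤ C * p.1)
    (hslice : ∃ n₀ : ℕ, 1 ≤ n₀ ∧ ∀ n : ℕ, n₀ ≤ n →
      (sgSlice S n).Finite ∧ ((sgSlice S n).ncard : ℤ) = d * n - g + 1) :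
    Tendsto (fun n : ℕ =>
        (sInf (sgSliceR S n) + sSup (sgSliceR S n)) / (2 * n * d)
          - (1 / ((n : ℝ) * d * ((sgSlice S n).ncard : ℝ)))
              * ∑ᶠ s ∈ sgSlice S n, (s : ℝ))
      atTop (nhds 0) :=
  statement_15_general d g hd S hadd hgen hslice
end
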